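/- arXiv:2205.13592 — 9 statements merged into one kernel-verified Lean document; each statement's English description precedes it below -/
import Mathlib

section
/- Let n ∈ ℕ, 𝒩 ⊆ ℤ^n satisfy: (1) there exist m, m' ∈ ℤ with {d : deg(d) ≤ m} ⊆ 𝒩 ⊆ {d : deg(d) ≤ m'}; (2) letting M be the largest degree of an element of 𝒩, there exists C such that every d with deg(d) = M has some d' ∈ 𝒩 with deg(d') = M and ‖d - d'‖₁ ≤ C. Define f(d) = min_{d' ∈ 𝒩} ‖d - d'‖₁. Then f is a Riemann function with offset -M; in particular f(d) = deg(d) - M whenever deg(d) ≥ M + Cn. -/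
open scoped BigOperators

/-- degree of a divisor -/
def deg {n : ℕ} (d : Fin n → ℤ) : ℤ := ∑ i, d i

/-- initially zero: vanishes for all sufficiently small degree -/
def InitiallyZero {n : ℕ} (f : (Fin n → ℤ) → ℤ) : Prop :=
  ∃ a : ℤ, ∀ d, deg d ≤ a → f d = 0

/-- indicator vector of a finite set of coordinates -/
def eI {n : ℕ} (I : Finset (Fin n)) : Fin n → ℤ := fun i => if i ∈ I then 1 else 0

/-- standard basis vector -/
def stdB {n : ℕ} (i : Fin n) : Fin n → ℤ := fun j => if j = i then 1 else 0

/-- the Möbius operator 𝔪 -/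
def mob {n : ℕ} (f : (Fin n → ℤ) → ℤ) : (Fin n → ℤ) → ℤ :=
  fun d => ∑ I : Finset (Fin n), (-1) ^ I.card * f (d - eI I)

/-- a modular function -/
def Modular {n : ℕ} (h : (Fin n → ℤ) → ℤ) : Prop := ∀ d, mob h d = 0

/-- L¹ distance (as a natural number) from `d` to the set `N` -/
noncomputable def distTo {n : ℕ} (N : Set (Fin n → ℤ)) (d : Fin n → ℤ) : ℕ :=
  sInf {k : ℕ | ∃ d' ∈ N, ∑ i, (d i - d' i).natAbs = k}

theorem stmt2 {n : ℕ} (N : Set (Fin n → ℤ)) (m m' M : ℤ) (C : ℕ)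
    (h1 : ∀ d, deg d ≤ m → d ∈ N) (h2 : ∀ d ∈ N, deg d ≤ m')
    (hMmem : ∃ d ∈ N, deg d = M) (hMmax : ∀ d ∈ N, deg d ≤ M)
    (hC : ∀ d : Fin n → ℤ, deg d = M →
      ∃ d' ∈ N, deg d' = M ∧ ∑ i, (d i - d' i).natAbs ≤ C) :
    (∃ a : ℤ, ∀ d, deg d ≤ a → (distTo N d : ℤ) = 0) ∧
    (∀ d : Fin n → ℤ, M + (C : ℤ) * n ≤ deg d → (distTo N d : ℤ) = deg d - M) := by
  constructor
  · refine ⟨m, fun d hd => ?_⟩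
    have hdN := h1 d hd
    have h0 : 0 ∈ {k : ℕ | ∃ d' ∈ N, ∑ i, (d i - d' i).natAbs = k} :=
      ⟨d, hdN, by simp⟩
    have : distTo N d = 0 := Nat.sInf_eq_zero.2 (Or.inl h0)
    simp [this]
  · intro d hd
    have hCn : (0:ℤ) ≤ (C:ℤ) * n := by positivity
    have hdM : M ≤ deg d := by linarith
    -- lower bound on every element of the set
    have hlb : ∀ k ∈ {k : ℕ | ∃ d' ∈ N, ∑ i, (d i - d' i).natAbs = k},
        deg d - M ≤ (k : ℤ) := by
      rintro k ⟨d', hd'N, rfl⟩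
      have h1' : deg d - deg d' ≤ ∑ i, |d i - d' i| := by
        rw [deg, deg, ← Finset.sum_sub_distrib]
        exact Finset.sum_le_sum fun i _ => le_abs_self _
      have h2' : (↑(∑ i, (d i - d' i).natAbs) : ℤ) = ∑ i, |d i - d' i| := by
        push_cast
        rfl
      have := hMmax d' hd'N
      omega
    -- key: there is d' ∈ N with deg d' = M and d' ≤ d pointwise
    have key : ∃ d' ∈ N, deg d' = M ∧ ∀ i, d' i ≤ d i := by
      rcases Nat.eq_zero_or_pos n with hn | hn
      · subst hn
        obtain ⟨d0, hd0, hdeg⟩ := hMmem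
        exact ⟨d0, hd0, hdeg, fun i => i.elim0⟩
      · set k : ℤ := deg d - M - (C:ℤ) * n with hk
        have hk0 : 0 ≤ k := by linarith
        set c : Fin n → ℤ := fun i => (C:ℤ) + if i = ⟨0, hn⟩ then k else 0 with hc
        have hcsum : ∑ i, c i = deg d - M := by
          rw [hc]
          rw [Finset.sum_add_distrib, Finset.sum_ite_eq' Finset.univ (⟨0, hn⟩ : Fin n)]
          simp [hk, mul_comm]
        set e : Fin n → ℤ := fun i => d i - c i with he
        have hedeg : deg e = M := by
          rw [deg, he]
          simp only
          rw [Finset.sum_sub_distrib, hcsum, ← deg]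
          ring
        obtain ⟨d', hd'N, hd'M, hd'C⟩ := hC e hedeg
        refine ⟨d', hd'N, hd'M, fun i => ?_⟩
        have h1i : (e i - d' i).natAbs ≤ C :=
          le_trans (Finset.single_le_sum (f := fun i => (e i - d' i).natAbs)
            (fun _ _ => Nat.zero_le _) (Finset.mem_univ i)) hd'C
        have habs : |e i - d' i| ≤ (C:ℤ) := by
          rw [← Int.natCast_natAbs]; exact_mod_cast h1i
        have hci : (C:ℤ) ≤ c i := by
          rw [hc]; dsimp only; split <;> linarith
        have := abs_le.1 habs
        have hei : e i = d i - c i := rfl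
        omega
    obtain ⟨d', hd'N, hd'M, hle⟩ := key
    have hmem : (deg d - M).toNat ∈ {k : ℕ | ∃ d'' ∈ N, ∑ i, (d i - d'' i).natAbs = k} := by
      refine ⟨d', hd'N, ?_⟩
      have hsum : (↑(∑ i, (d i - d' i).natAbs) : ℤ) = deg d - M := by
        push_cast
        rw [Finset.sum_congr rfl fun i (_ : i ∈ Finset.univ) =>
          abs_of_nonneg (show (0:ℤ) ≤ d i - d' i by linarith [hle i])]
        rw [Finset.sum_sub_distrib, ← deg, ← deg, hd'M]
      omega
    have hub : distTo N d ≤ (deg d - M).toNat := Nat.sInf_le hmem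
    have hlb' : (deg d - M).toNat ≤ distTo N d := by
      refine le_csInf ⟨_, hmem⟩ fun k hk => ?_
      have := hlb k hk
      omega
    have : distTo N d = (deg d - M).toNat := le_antisymm hub hlb'
    rw [this]
    omega
end

section
/- Fix a ∈ ℤ and n ∈ ℕ. Any integer-valued function h₀ defined on the strip {d ∈ ℤ^n : a ≤ deg(d) ≤ a + n - 1} has a unique extension to a modular function h: ℤ^n → ℤ. -/
open scoped BigOperators

namespace Stmt6Aux

variable {n : ℕ}

lemma deg_sub (d e : Fin n → ℤ) : deg (d - e) = deg d - deg e := by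
  simp [deg, Finset.sum_sub_distrib]

lemma deg_add (d e : Fin n → ℤ) : deg (d + e) = deg d + deg e := by
  simp [deg, Finset.sum_add_distrib]

lemma deg_eI (I : Finset (Fin n)) : deg (eI I) = I.card := by
  simp [deg, eI]

lemma deg_one : deg (1 : Fin n → ℤ) = n := by
  simp [deg]

lemma eI_empty : (eI (∅ : Finset (Fin n))) = 0 := by funext i; simp [eI]

lemma eI_univ : (eI (Finset.univ : Finset (Fin n))) = 1 := by funext i; simp [eI]

lemma card_pos_of_ne_empty {I : Finset (Fin n)} (h : I ≠ ∅) : 1 ≤ I.card :=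
  Finset.card_pos.mpr (Finset.nonempty_iff_ne_empty.mpr h)

lemma card_le_n (I : Finset (Fin n)) : I.card ≤ n := by
  simpa using Finset.card_le_univ I

lemma card_lt_n {I : Finset (Fin n)} (h : I ≠ Finset.univ) : I.card < n := by
  have h1 := Finset.card_lt_card (Finset.ssubset_univ_iff.mpr h)
  simpa using h1

/-- distance of `deg d` to the strip `[a, a+n-1]` -/
def mu (a : ℤ) (n : ℕ) (d : Fin n → ℤ) : ℕ :=
  (deg d - (a + n - 1)).toNat + (a - deg d).toNat

lemma mu_up {a : ℤ} {d : Fin n → ℤ} (hd : a + n ≤ deg d) {I : Finset (Fin n)}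
    (hI : I ≠ ∅) : mu a n (d - eI I) < mu a n d := by
  have h1 := card_pos_of_ne_empty hI
  have h2 := card_le_n I
  have h3 : deg (d - eI I) = deg d - I.card := by rw [deg_sub, deg_eI]
  unfold mu
  rw [h3]
  omega

lemma mu_down {a : ℤ} {d : Fin n → ℤ} (hd : deg d < a) {I : Finset (Fin n)}
    (hI : I ≠ Finset.univ) : mu a n (d + 1 - eI I) < mu a n d := by
  have h2 := card_lt_n hI
  have h3 : deg (d + 1 - eI I) = deg d + n - I.card := by
    rw [deg_sub, deg_add, deg_eI, deg_one]
  unfold mu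
  rw [h3]
  omega

/-- iterative construction of the extension -/
def F (a : ℤ) (h0 : (Fin n → ℤ) → ℤ) : ℕ → (Fin n → ℤ) → ℤ
  | 0 => h0
  | (k+1) => fun d =>
      if a + n ≤ deg d then
        -∑ I ∈ Finset.univ.erase (∅ : Finset (Fin n)),
            (-1)^I.card * F a h0 k (d - eI I)
      else if deg d < a then
        (-1)^(n+1) * ∑ I ∈ Finset.univ.erase (Finset.univ : Finset (Fin n)),
            (-1)^I.card * F a h0 k (d + 1 - eI I)
      else h0 d


lemma F_succ_def (a : ℤ) (h0 : (Fin n → ℤ) → ℤ) (k : ℕ) (d : Fin n → ℤ) :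
    F a h0 (k+1) d =
      if a + n ≤ deg d then
        -∑ I ∈ Finset.univ.erase (∅ : Finset (Fin n)),
            (-1)^I.card * F a h0 k (d - eI I)
      else if deg d < a then
        (-1)^(n+1) * ∑ I ∈ Finset.univ.erase (Finset.univ : Finset (Fin n)),
            (-1)^I.card * F a h0 k (d + 1 - eI I)
      else h0 d := rfl

lemma F_succ_stable (a : ℤ) (h0 : (Fin n → ℤ) → ℤ) :
    ∀ k, ∀ d : Fin n → ℤ, mu a n d ≤ k → F a h0 (k+1) d = F a h0 k d := by
  intro k
  induction k with
  | zero =>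
    intro d hd
    have h1 : ¬ (a + n ≤ deg d) := by unfold mu at hd; omega
    have h2 : ¬ (deg d < a) := by unfold mu at hd; omega
    rw [F_succ_def, if_neg h1, if_neg h2]
    rfl
  | succ k ih =>
    intro d hd
    by_cases hu : a + n ≤ deg d
    · rw [show k + 1 + 1 = (k+1)+1 from rfl, F_succ_def, F_succ_def, if_pos hu, if_pos hu]
      congr 1
      apply Finset.sum_congr rfl
      intro I hI
      have hlt := mu_up hu (Finset.ne_of_mem_erase hI)
      rw [ih _ (by omega)]
    · by_cases hl : deg d < a
      · rw [show k + 1 + 1 = (k+1)+1 from rfl, F_succ_def, F_succ_def, if_neg hu, if_neg hu, if_pos hl, if_pos hl]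
        congr 1
        apply Finset.sum_congr rfl
        intro I hI
        have hlt := mu_down hl (Finset.ne_of_mem_erase hI)
        rw [ih _ (by omega)]
      · rw [show k + 1 + 1 = (k+1)+1 from rfl, F_succ_def, F_succ_def, if_neg hu, if_neg hu, if_neg hl, if_neg hl]

lemma F_stable (a : ℤ) (h0 : (Fin n → ℤ) → ℤ) (k : ℕ) :
    ∀ m, ∀ d : Fin n → ℤ, mu a n d ≤ k → F a h0 (k + m) d = F a h0 k d := by
  intro m
  induction m with
  | zero => intro d _; rfl
  | succ m ih =>
    intro d hd
    have := F_succ_stable a h0 (k + m) d (by omega)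
    rw [show k + (m+1) = (k+m)+1 from rfl, this, ih d hd]

/-- the extension -/
def H (a : ℤ) (h0 : (Fin n → ℤ) → ℤ) (d : Fin n → ℤ) : ℤ := F a h0 (mu a n d) d

lemma H_eq (a : ℤ) (h0 : (Fin n → ℤ) → ℤ) {k : ℕ} {d : Fin n → ℤ}
    (hk : mu a n d ≤ k) : F a h0 k d = H a h0 d := by
  have := F_stable a h0 (mu a n d) (k - mu a n d) d le_rfl
  unfold H
  rw [← this]
  congr 1
  omega

lemma H_strip (a : ℤ) (h0 : (Fin n → ℤ) → ℤ) {d : Fin n → ℤ}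
    (hd1 : a ≤ deg d) (hd2 : deg d ≤ a + n - 1) : H a h0 d = h0 d := by
  have h : mu a n d = 0 := by unfold mu; omega
  unfold H
  rw [h]
  rfl

lemma H_up (a : ℤ) (h0 : (Fin n → ℤ) → ℤ) {d : Fin n → ℤ} (hd : a + n ≤ deg d) :
    H a h0 d = -∑ I ∈ Finset.univ.erase (∅ : Finset (Fin n)),
        (-1)^I.card * H a h0 (d - eI I) := by
  obtain ⟨k, hk⟩ : ∃ k, mu a n d = k + 1 := ⟨mu a n d - 1, by unfold mu; omega⟩
  have h1 : H a h0 d = F a h0 (k+1) d := by unfold H; rw [hk]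
  rw [h1, F_succ_def, if_pos hd]
  congr 1
  apply Finset.sum_congr rfl
  intro I hI
  have hlt := mu_up hd (Finset.ne_of_mem_erase hI)
  rw [H_eq a h0 (show mu a n (d - eI I) ≤ k by omega)]

lemma H_down (a : ℤ) (h0 : (Fin n → ℤ) → ℤ) {d : Fin n → ℤ} (hd : deg d < a) :
    H a h0 d = (-1)^(n+1) * ∑ I ∈ Finset.univ.erase (Finset.univ : Finset (Fin n)),
        (-1)^I.card * H a h0 (d + 1 - eI I) := by
  obtain ⟨k, hk⟩ : ∃ k, mu a n d = k + 1 := ⟨mu a n d - 1, by unfold mu; omega⟩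
  have h1 : H a h0 d = F a h0 (k+1) d := by unfold H; rw [hk]
  have h2 : ¬ (a + n ≤ deg d) := by
    have : (0:ℤ) ≤ n := Int.ofNat_nonneg n
    omega
  rw [h1, F_succ_def, if_neg h2, if_pos hd]
  congr 1
  apply Finset.sum_congr rfl
  intro I hI
  have hlt := mu_down hd (Finset.ne_of_mem_erase hI)
  rw [H_eq a h0 (show mu a n (d + 1 - eI I) ≤ k by omega)]

lemma H_modular (a : ℤ) (h0 : (Fin n → ℤ) → ℤ) : Modular (H a h0) := by
  intro d
  unfold mob
  by_cases hu : a + n ≤ deg d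
  · rw [← Finset.sum_erase_add _ _ (Finset.mem_univ (∅ : Finset (Fin n)))]
    have he : (-1:ℤ)^(∅:Finset (Fin n)).card * H a h0 (d - eI ∅) = H a h0 d := by
      simp [eI_empty]
    rw [he, H_up a h0 hu]
    ring
  · -- use the down equation at d - 1
    have hd1 : deg (d - 1) < a := by
      have : deg (d - 1) = deg d - n := by rw [deg_sub, deg_one]
      have hn0 : (0:ℤ) ≤ n := Int.ofNat_nonneg n
      omega
    rw [← Finset.sum_erase_add _ _ (Finset.mem_univ (Finset.univ : Finset (Fin n)))]
    have hcard : (Finset.univ : Finset (Fin n)).card = n := by simp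
    have he : (-1:ℤ)^(Finset.univ : Finset (Fin n)).card * H a h0 (d - eI Finset.univ)
        = (-1)^n * H a h0 (d - 1) := by rw [hcard, eI_univ]
    rw [he, H_down a h0 hd1]
    have hsum : ∀ I ∈ Finset.univ.erase (Finset.univ : Finset (Fin n)),
        (-1:ℤ)^I.card * H a h0 (d - 1 + 1 - eI I) = (-1)^I.card * H a h0 (d - eI I) := by
      intro I _
      congr 2
      abel
    rw [Finset.sum_congr rfl hsum]
    have hpow : ((-1:ℤ)^n) * ((-1)^(n+1)) = -1 := by
      rw [← pow_add]
      have : n + (n + 1) = 2 * n + 1 := by omega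
      rw [this, pow_succ, pow_mul]
      norm_num
    set S := ∑ I ∈ Finset.univ.erase (Finset.univ : Finset (Fin n)),
        (-1:ℤ)^I.card * H a h0 (d - eI I) with hS
    calc S + (-1:ℤ)^n * ((-1)^(n+1) * S) = S + ((-1:ℤ)^n * (-1)^(n+1)) * S := by ring
      _ = 0 := by rw [hpow]; ring

lemma modular_up {h : (Fin n → ℤ) → ℤ} (hm : Modular h) (d : Fin n → ℤ) :
    h d = -∑ I ∈ Finset.univ.erase (∅ : Finset (Fin n)), (-1)^I.card * h (d - eI I) := by
  have hmd := hm d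
  unfold mob at hmd
  rw [← Finset.sum_erase_add _ _ (Finset.mem_univ (∅ : Finset (Fin n)))] at hmd
  simp only [Finset.card_empty, pow_zero, one_mul, eI_empty, sub_zero] at hmd
  linarith

lemma modular_down {h : (Fin n → ℤ) → ℤ} (hm : Modular h) (d : Fin n → ℤ) :
    h d = (-1)^(n+1) * ∑ I ∈ Finset.univ.erase (Finset.univ : Finset (Fin n)),
        (-1)^I.card * h (d + 1 - eI I) := by
  have hmd := hm (d + 1)
  unfold mob at hmd
  rw [← Finset.sum_erase_add _ _ (Finset.mem_univ (Finset.univ : Finset (Fin n)))] at hmd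
  have hcard : (Finset.univ : Finset (Fin n)).card = n := by simp
  have he : (-1:ℤ)^(Finset.univ : Finset (Fin n)).card * h (d + 1 - eI Finset.univ)
      = (-1)^n * h d := by rw [hcard, eI_univ, add_sub_cancel_right]
  rw [he] at hmd
  set S := ∑ I ∈ Finset.univ.erase (Finset.univ : Finset (Fin n)),
      (-1:ℤ)^I.card * h (d + 1 - eI I) with hS
  have key : (-1:ℤ)^n * h d = -S := by linarith
  have h1 : ((-1:ℤ)^n) * ((-1)^n) = 1 := by
    rw [← pow_add, ← two_mul, pow_mul]
    norm_num
  calc h d = ((-1:ℤ)^n * (-1)^n) * h d := by rw [h1, one_mul]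
    _ = (-1:ℤ)^n * ((-1)^n * h d) := by ring
    _ = (-1:ℤ)^n * (-S) := by rw [key]
    _ = (-1:ℤ)^(n+1) * S := by rw [pow_succ]; ring

lemma unique_aux {a : ℤ} {h h' : (Fin n → ℤ) → ℤ} (hm : Modular h) (hm' : Modular h')
    (hstrip : ∀ d, a ≤ deg d → deg d ≤ a + n - 1 → h d = h' d) :
    ∀ k, ∀ d : Fin n → ℤ, mu a n d ≤ k → h d = h' d := by
  intro k
  induction k with
  | zero =>
    intro d hd
    have h1 : a ≤ deg d := by unfold mu at hd; omega
    have h2 : deg d ≤ a + n - 1 := by unfold mu at hd; omega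
    exact hstrip d h1 h2
  | succ k ih =>
    intro d hd
    by_cases hk : mu a n d ≤ k
    · exact ih d hk
    · by_cases hu : a + n ≤ deg d
      · rw [modular_up hm d, modular_up hm' d]
        congr 1
        apply Finset.sum_congr rfl
        intro I hI
        have hlt := mu_up hu (Finset.ne_of_mem_erase hI)
        rw [ih _ (by omega)]
      · have hl : deg d < a := by unfold mu at hd hk; omega
        rw [modular_down hm d, modular_down hm' d]
        congr 1
        apply Finset.sum_congr rfl
        intro I hI
        have hlt := mu_down hl (Finset.ne_of_mem_erase hI)
        rw [ih _ (by omega)]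

end Stmt6Aux

theorem stmt6 {n : ℕ} (hn : 0 < n) (a : ℤ) (h0 : (Fin n → ℤ) → ℤ) :
    ∃! h : (Fin n → ℤ) → ℤ, Modular h ∧
      ∀ d, a ≤ deg d → deg d ≤ a + (n : ℤ) - 1 → h d = h0 d := by
  refine ⟨Stmt6Aux.H a h0,
    ⟨Stmt6Aux.H_modular a h0, fun d h1 h2 => Stmt6Aux.H_strip a h0 h1 h2⟩, ?_⟩
  rintro h' ⟨hm', hs'⟩
  funext d
  exact Stmt6Aux.unique_aux hm' (Stmt6Aux.H_modular a h0)
    (fun e he1 he2 => by rw [hs' e he1 he2, Stmt6Aux.H_strip a h0 he1 he2])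
    (Stmt6Aux.mu a n d) d le_rfl
end

section
/- Let 𝒟ⁿ_coord = {d ∈ ℤ^n : dᵢ = 0 for at least one i}. Every function f: 𝒟ⁿ_coord → ℤ extends uniquely to a modular function h: ℤ^n → ℤ. -/
open scoped BigOperators

/-- set of negative coordinates -/
def negset {n : ℕ} (d : Fin n → ℤ) : Finset (Fin n) :=
  Finset.univ.filter (fun i => d i < 0)

/-- L¹ norm -/
def mu {n : ℕ} (d : Fin n → ℤ) : ℕ := ∑ i, (d i).natAbs

lemma mu_lt {n : ℕ} (d : Fin n → ℤ) (hd : ∀ i, d i ≠ 0) (I : Finset (Fin n))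
    (hI : I ≠ negset d) : mu (d + eI (negset d) - eI I) < mu d := by
  have hle : ∀ i, ((d + eI (negset d) - eI I) i).natAbs ≤ (d i).natAbs := by
    intro i
    have := hd i
    simp only [Pi.add_apply, Pi.sub_apply, eI, negset, Finset.mem_filter,
      Finset.mem_univ, true_and]
    by_cases h1 : d i < 0 <;> by_cases h2 : i ∈ I <;> simp [h1, h2] <;> omega
  have hstrict : ∃ i, ((d + eI (negset d) - eI I) i).natAbs < (d i).natAbs := by
    have : ¬∀ i, i ∈ I ↔ i ∈ negset d := fun h => hI (Finset.ext h)
    push_neg at this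
    obtain ⟨i, hi⟩ := this
    refine ⟨i, ?_⟩
    have := hd i
    have hmem : (i ∈ negset d) ↔ d i < 0 := by
      simp [negset]
    simp only [Pi.add_apply, Pi.sub_apply, eI, negset, Finset.mem_filter,
      Finset.mem_univ, true_and]
    rw [hmem] at hi
    by_cases h1 : d i < 0 <;> by_cases h2 : i ∈ I <;> simp [h1, h2] at hi ⊢ <;> omega
  obtain ⟨i, hi⟩ := hstrict
  exact Finset.sum_lt_sum (fun j _ => hle j) ⟨i, Finset.mem_univ i, hi⟩

/-- the extension -/
noncomputable def extFun {n : ℕ} (f : (Fin n → ℤ) → ℤ) (d : Fin n → ℤ) : ℤ :=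
  if h : ∃ i, d i = 0 then f d
  else (-1) ^ ((negset d).card + 1) *
    ∑ I ∈ (Finset.univ.erase (negset d)).attach,
      (-1) ^ (I.1.card) * extFun f (d + eI (negset d) - eI I.1)
termination_by mu d
decreasing_by
  push_neg at h
  exact mu_lt d h I.1 (Finset.ne_of_mem_erase I.2)

lemma extFun_eq {n : ℕ} (f : (Fin n → ℤ) → ℤ) (d : Fin n → ℤ) (hd : ∀ i, d i ≠ 0) :
    (-1 : ℤ) ^ (negset d).card * extFun f d =
      - ∑ I ∈ Finset.univ.erase (negset d),
          (-1) ^ I.card * extFun f (d + eI (negset d) - eI I) := by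
  have hz : ¬∃ i, d i = 0 := by push_neg; exact hd
  rw [extFun, dif_neg hz]
  rw [Finset.sum_attach _ (fun I => (-1 : ℤ) ^ I.card * extFun f (d + eI (negset d) - eI I))]
  rw [← mul_assoc, ← pow_add]
  have hodd : (-1 : ℤ) ^ ((negset d).card + ((negset d).card + 1)) = -1 :=
    Odd.neg_one_pow ⟨(negset d).card, by ring⟩
  rw [hodd, neg_one_mul]

lemma modular_extFun {n : ℕ} (f : (Fin n → ℤ) → ℤ) : Modular (extFun f) := by
  intro c
  set N : Finset (Fin n) := Finset.univ.filter (fun i => c i ≤ 0) with hNdef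
  set d : Fin n → ℤ := c - eI N with hddef
  have hd : ∀ i, d i ≠ 0 := by
    intro i
    simp only [hddef, Pi.sub_apply, eI, hNdef, Finset.mem_filter, Finset.mem_univ, true_and]
    by_cases h : c i ≤ 0 <;> simp [h] <;> omega
  have hN : negset d = N := by
    ext i
    simp only [negset, hNdef, Finset.mem_filter, Finset.mem_univ, true_and, hddef,
      Pi.sub_apply, eI]
    by_cases h : c i ≤ 0 <;> simp [h] <;> omega
  have hc : d + eI N = c := by funext i; simp [hddef]
  have key := extFun_eq f d hd
  rw [hN] at key
  have harg : ∀ I : Finset (Fin n), d + eI N - eI I = c - eI I := by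
    intro I; rw [hc]
  simp only [harg] at key
  unfold mob
  rw [← Finset.add_sum_erase _ _ (Finset.mem_univ N)]
  have hcd : c - eI N = d := by rw [← hc]; funext i; simp
  rw [hcd, key]
  ring

theorem stmt7 {n : ℕ} (f : (Fin n → ℤ) → ℤ) :
    ∃! h : (Fin n → ℤ) → ℤ, Modular h ∧
      ∀ d : Fin n → ℤ, (∃ i, d i = 0) → h d = f d := by
  refine ⟨extFun f, ⟨modular_extFun f, fun d hd => ?_⟩, ?_⟩
  · rw [extFun, dif_pos hd]
  · rintro g ⟨hgmod, hgf⟩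
    suffices H : ∀ k (d : Fin n → ℤ), mu d ≤ k → g d = extFun f d by
      funext d; exact H (mu d) d le_rfl
    intro k
    induction k using Nat.strong_induction_on with
    | _ k IH =>
      intro d hdk
      by_cases hz : ∃ i, d i = 0
      · rw [hgf d hz, extFun, dif_pos hz]
      · push_neg at hz
        set N := negset d with hNdef
        set c : Fin n → ℤ := d + eI N with hcdef
        have hcd : c - eI N = d := by funext i; simp [hcdef]
        have hg := hgmod c
        unfold mob at hg
        rw [← Finset.add_sum_erase _ _ (Finset.mem_univ N), hcd] at hg
        have hsum : ∑ I ∈ Finset.univ.erase N, (-1 : ℤ) ^ I.card * g (c - eI I)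
            = ∑ I ∈ Finset.univ.erase N, (-1 : ℤ) ^ I.card * extFun f (c - eI I) := by
          refine Finset.sum_congr rfl fun I hI => ?_
          congr 1
          have hlt : mu (c - eI I) < mu d := by
            have : c - eI I = d + eI (negset d) - eI I := by rw [hcdef, hNdef]
            rw [this]
            exact mu_lt d hz I (Finset.ne_of_mem_erase hI)
          exact IH (mu (c - eI I)) (lt_of_lt_of_le hlt hdk) _ le_rfl
        rw [hsum] at hg
        have key := extFun_eq f d hz
        have harg : ∀ I : Finset (Fin n), d + eI (negset d) - eI I = c - eI I := by
          intro I; rw [hcdef, hNdef]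
        simp only [harg, ← hNdef] at key
        have : (-1 : ℤ) ^ N.card * g d = (-1 : ℤ) ^ N.card * extFun f d := by
          rw [key]; linarith
        exact mul_left_cancel₀ (pow_ne_zero _ (by norm_num)) this
end

section
/- Let f: ℤ^n → ℤ be a generalized Riemann function with W = 𝔪f, let h be the unique modular function eventually equal to f, let K ∈ ℤ^n, L = K + (1,…,1), and define f^∧_K(d) = f(K - d) - h(K - d). Then 𝔪(f^∧_K) = (-1)^n W*_L, where W*_L(d) = W(L - d). -/
open scoped BigOperators

lemma eI_compl {n : ℕ} (I : Finset (Fin n)) : eI Iᶜ = (1 : Fin n → ℤ) - eI I := by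
  funext i
  simp only [eI, Finset.mem_compl, Pi.sub_apply, Pi.one_apply]
  by_cases hi : i ∈ I <;> simp [hi]

lemma sign_compl {n : ℕ} (I : Finset (Fin n)) :
    ((-1 : ℤ)) ^ Iᶜ.card = (-1) ^ n * (-1) ^ I.card := by
  have hc : I.card + Iᶜ.card = n := by
    rw [Finset.card_add_card_compl]; simp
  have : ((-1 : ℤ)) ^ n = (-1) ^ I.card * (-1) ^ Iᶜ.card := by
    rw [← pow_add, hc]
  have h2 : ((-1:ℤ)) ^ I.card * (-1) ^ I.card = 1 := by
    rw [← pow_add]; exact Even.neg_one_pow ⟨I.card, rfl⟩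
  calc ((-1:ℤ)) ^ Iᶜ.card = ((-1) ^ I.card * (-1) ^ I.card) * (-1) ^ Iᶜ.card := by
        rw [h2, one_mul]
    _ = (-1) ^ n * (-1) ^ I.card := by rw [this]; ring

lemma sum_compl_reindex {n : ℕ} (F : Finset (Fin n) → ℤ) :
    ∑ I : Finset (Fin n), F Iᶜ = ∑ I : Finset (Fin n), F I :=
  Fintype.sum_equiv ⟨compl, compl, compl_compl, compl_compl⟩ _ _ (fun I => rfl)

theorem stmt9 {n : ℕ} (f h : (Fin n → ℤ) → ℤ) (hf0 : InitiallyZero f)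
    (hmod : Modular h) (hev : ∃ b : ℤ, ∀ d, b ≤ deg d → f d = h d)
    (K : Fin n → ℤ) :
    ∀ d, mob (fun x => f (K - x) - h (K - x)) d
      = (-1) ^ n * mob f ((K + 1) - d) := by
  intro d
  have hpt : ∀ I : Finset (Fin n), K - (d - eI I) = (K + 1 - d) - eI Iᶜ := by
    intro I
    rw [eI_compl]
    abel
  have hf : ∑ I : Finset (Fin n), (-1 : ℤ) ^ I.card * f (K - (d - eI I))
      = (-1) ^ n * mob f ((K + 1) - d) := by
    unfold mob
    rw [Finset.mul_sum]
    rw [← sum_compl_reindex (fun I => (-1 : ℤ) ^ n * ((-1) ^ I.card * f (K + 1 - d - eI I)))]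
    refine Finset.sum_congr rfl fun I _ => ?_
    rw [hpt I, ← mul_assoc, ← sign_compl, compl_compl]
  have hh : ∑ I : Finset (Fin n), (-1 : ℤ) ^ I.card * h (K - (d - eI I)) = 0 := by
    have := hmod ((K + 1) - d)
    unfold mob at this
    rw [← sum_compl_reindex (fun I => (-1 : ℤ) ^ I.card * h (K + 1 - d - eI I))] at this
    have heq : ∑ I : Finset (Fin n), (-1 : ℤ) ^ Iᶜ.card * h (K + 1 - d - eI Iᶜ)
        = (-1) ^ n * ∑ I : Finset (Fin n), (-1 : ℤ) ^ I.card * h (K - (d - eI I)) := by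
      rw [Finset.mul_sum]
      refine Finset.sum_congr rfl fun I _ => ?_
      rw [hpt I, sign_compl, mul_assoc]
    rw [heq] at this
    rcases mul_eq_zero.mp this with h1 | h1
    · exact absurd h1 (by positivity)
    · exact h1
  unfold mob
  simp only [sub_mul, mul_sub, Finset.sum_sub_distrib]
  rw [hf, hh, sub_zero]
  rfl
end

section
/- Let f: ℤ^n → ℤ be a generalized Riemann function, K ∈ ℤ^n, L = K + 𝟏, and W = 𝔪f. Then f^∧_K = f if and only if W(L - d) = (-1)^n W(d) for all d ∈ ℤ^n. -/
open scoped BigOperators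

lemma deg_sub_eI {n : ℕ} (d : Fin n → ℤ) (I : Finset (Fin n)) :
    deg (d - eI I) = deg d - I.card := by
  simp [deg, eI, Finset.sum_sub_distrib, Finset.sum_ite_mem]

lemma deg_sub {n : ℕ} (K d : Fin n → ℤ) : deg (K - d) = deg K - deg d := by
  simp [deg, Finset.sum_sub_distrib]

lemma key {n : ℕ} (g : (Fin n → ℤ) → ℤ) (d : Fin n → ℤ) :
    ∑ I : Finset (Fin n), (-1 : ℤ) ^ I.card * g (d - 1 + eI I) = (-1) ^ n * mob g d := by
  rw [mob, Finset.mul_sum]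
  refine (Fintype.sum_bijective compl compl_involutive.bijective _ _ ?_).symm
  intro I
  have hcard : Iᶜ.card = n - I.card := by
    simp [Finset.card_compl]
  have hle : I.card ≤ n := I.card_le_univ.trans_eq (by simp)
  have hsign : (-1 : ℤ) ^ (n - I.card) = (-1) ^ n * (-1) ^ I.card := by
    have : (-1 : ℤ) ^ (n - I.card) * (-1) ^ I.card * (-1) ^ I.card
        = (-1) ^ n * (-1) ^ I.card := by
      rw [← pow_add, show n - I.card + I.card = n from by omega]
    have h1 : ((-1 : ℤ) ^ I.card) * ((-1 : ℤ) ^ I.card) = 1 := by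
      rw [← pow_add]; exact Even.neg_one_pow (by simp [Nat.even_add])
    calc (-1 : ℤ) ^ (n - I.card)
        = (-1 : ℤ) ^ (n - I.card) * ((-1) ^ I.card * (-1) ^ I.card) := by rw [h1, mul_one]
      _ = (-1 : ℤ) ^ n * (-1) ^ I.card := by rw [← mul_assoc, this]
  have harg : d - 1 + eI Iᶜ = d - eI I := by
    funext i
    simp only [Pi.add_apply, Pi.sub_apply, Pi.one_apply, eI, Finset.mem_compl]
    by_cases hi : i ∈ I <;> simp [hi]
  rw [hcard, harg, hsign]
  ring

lemma modular_initiallyZero {n : ℕ} (g : (Fin n → ℤ) → ℤ) (hm : Modular g)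
    (h0 : InitiallyZero g) : ∀ d, g d = 0 := by
  obtain ⟨a, ha⟩ := h0
  suffices H : ∀ m : ℕ, ∀ d, deg d ≤ a + m → g d = 0 by
    intro d
    exact H (deg d - a).toNat d (by omega)
  intro m
  induction m with
  | zero => intro d hd; exact ha d (by simpa using hd)
  | succ m ih =>
    intro d hd
    have hmd := hm d
    rw [mob] at hmd
    rw [Finset.sum_eq_single_of_mem ∅ (Finset.mem_univ _)] at hmd
    · have he : d - eI ∅ = d := by funext i; simp [eI]
      simpa [he] using hmd
    · intro I _ hI
      have hc : 1 ≤ I.card := Finset.card_pos.2 (Finset.nonempty_iff_ne_empty.2 hI)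
      have : deg (d - eI I) ≤ a + m := by
        rw [deg_sub_eI]; omega
      rw [ih _ this, mul_zero]

theorem stmt11 {n : ℕ} (f h : (Fin n → ℤ) → ℤ) (hf0 : InitiallyZero f)
    (hmod : Modular h) (hev : ∃ b : ℤ, ∀ d, b ≤ deg d → f d = h d)
    (K : Fin n → ℤ) :
    (∀ d, f (K - d) - h (K - d) = f d) ↔
      (∀ d, mob f ((K + 1) - d) = (-1) ^ n * mob f d) := by
  constructor
  · intro H d
    have step : ∀ I : Finset (Fin n),
        f ((K + 1) - d - eI I) = f (d - 1 + eI I) + h ((K + 1) - d - eI I) := by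
      intro I
      have harg : (K + 1) - d - eI I = K - (d - 1 + eI I) := by
        funext i; simp only [Pi.add_apply, Pi.sub_apply, Pi.one_apply]; ring
      have := H (d - 1 + eI I)
      rw [harg]
      linarith
    calc mob f ((K + 1) - d)
        = ∑ I : Finset (Fin n), (-1 : ℤ) ^ I.card *
            (f (d - 1 + eI I) + h ((K + 1) - d - eI I)) := by
          rw [mob]; exact Finset.sum_congr rfl fun I _ => by rw [step I]
      _ = (∑ I : Finset (Fin n), (-1 : ℤ) ^ I.card * f (d - 1 + eI I))
          + mob h ((K + 1) - d) := by
          rw [mob, ← Finset.sum_add_distrib]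
          exact Finset.sum_congr rfl fun I _ => by ring
      _ = (-1) ^ n * mob f d := by rw [key, hmod, add_zero]
  · intro H d
    set g : (Fin n → ℤ) → ℤ := fun x => f (K - x) - h (K - x) - f x with hg
    have hgmod : Modular g := by
      intro x
      have harg : ∀ I : Finset (Fin n), K - (x - eI I) = (K + 1) - x - 1 + eI I := by
        intro I; funext i; simp only [Pi.add_apply, Pi.sub_apply, Pi.one_apply]; ring
      have expand : mob g x
          = (∑ I : Finset (Fin n), (-1 : ℤ) ^ I.card * f ((K + 1) - x - 1 + eI I))
            - (∑ I : Finset (Fin n), (-1 : ℤ) ^ I.card * h ((K + 1) - x - 1 + eI I))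
            - mob f x := by
        simp only [mob, hg, harg, ← Finset.sum_sub_distrib]
        exact Finset.sum_congr rfl fun I _ => by ring
      rw [expand, key, key, hmod, mul_zero, H x]
      have hsq : ((-1 : ℤ) ^ n) * ((-1 : ℤ) ^ n) = 1 := by
        rw [← pow_add]; exact Even.neg_one_pow (by simp [Nat.even_add])
      calc (-1 : ℤ) ^ n * ((-1) ^ n * mob f x) - 0 - mob f x
          = ((-1 : ℤ) ^ n * (-1) ^ n) * mob f x - mob f x := by ring
        _ = 0 := by rw [hsq]; ring
    have hg0 : InitiallyZero g := by
      obtain ⟨a, ha⟩ := hf0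
      obtain ⟨b, hb⟩ := hev
      refine ⟨min a (deg K - b), fun x hx => ?_⟩
      have h1 : f x = 0 := ha x (le_trans hx (min_le_left _ _))
      have h2 : f (K - x) = h (K - x) := by
        apply hb
        rw [deg_sub]
        have := le_trans hx (min_le_right _ _)
        omega
      simp [hg, h1, h2]
    have := modular_initiallyZero g hgmod hg0 d
    simp only [hg] at this
    linarith
end

section
/- Let f: ℤ² → ℤ be a Riemann function with weight W = 𝔪f. Then for every fixed d₁, ∑_{d₂ ∈ ℤ} W(d₁, d₂) = 1, and for every fixed d₂, ∑_{d₁ ∈ ℤ} W(d₁, d₂) = 1 (these sums have finitely many nonzero terms). -/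
open scoped BigOperators

lemma mob2 (f : (Fin 2 → ℤ) → ℤ) (x y : ℤ) :
    mob f ![x, y] = f ![x, y] - f ![x - 1, y] - f ![x, y - 1] + f ![x - 1, y - 1] := by
  have huniv : (Finset.univ : Finset (Finset (Fin 2))) = {∅, {0}, {1}, {0, 1}} := by decide
  have e0 : ![x, y] - eI ({0} : Finset (Fin 2)) = ![x - 1, y] := by
    funext i; fin_cases i <;> simp [eI]
  have e1 : ![x, y] - eI ({1} : Finset (Fin 2)) = ![x, y - 1] := by
    funext i; fin_cases i <;> simp [eI]
  have e01 : ![x, y] - eI ({0, 1} : Finset (Fin 2)) = ![x - 1, y - 1] := by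
    funext i; fin_cases i <;> simp [eI]
  have ee : ![x, y] - eI (∅ : Finset (Fin 2)) = ![x, y] := by
    funext i; fin_cases i <;> simp [eI]
  rw [mob, huniv]
  rw [Finset.sum_insert (by decide), Finset.sum_insert (by decide),
    Finset.sum_insert (by decide), Finset.sum_singleton]
  rw [e0, e1, e01, ee]
  norm_num
  ring

lemma tele (g : ℤ → ℤ) (L : ℤ) (n : ℕ) :
    ∑ x ∈ Finset.Icc L (L + n), (g x - g (x - 1)) = g (L + n) - g (L - 1) := by
  induction n with
  | zero => simp
  | succ n ih =>
    have h1 : (L + (n + 1 : ℕ)) = (L + n) + 1 := by push_cast; ring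
    have h2 : Finset.Icc L ((L + n) + 1) = insert ((L + n) + 1) (Finset.Icc L (L + n)) := by
      ext z
      simp only [Finset.mem_Icc, Finset.mem_insert]
      omega
    rw [h1, h2, Finset.sum_insert (by simp), ih]
    ring_nf

lemma key_s12 (F : ℤ → ℤ → ℤ) (a : ℤ) (h0 : ∀ x y, x + y ≤ a → F x y = 0)
    (C b : ℤ) (hb : ∀ x y, b ≤ x + y → F x y = x + y + C) (d₁ : ℤ) :
    ∑ᶠ y : ℤ, (F d₁ y - F (d₁ - 1) y - F d₁ (y - 1) + F (d₁ - 1) (y - 1)) = 1 := by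
  set W : ℤ → ℤ := fun y => F d₁ y - F (d₁ - 1) y - F d₁ (y - 1) + F (d₁ - 1) (y - 1) with hW
  set L : ℤ := a - d₁ with hL
  set n : ℕ := (b - a + 2).toNat with hn
  have hnn : (b - a + 2 : ℤ) ≤ (n : ℤ) := Int.self_le_toNat _
  set U : ℤ := L + n with hU
  have hsupp : Function.support W ⊆ (Finset.Icc L U : Finset ℤ) := by
    intro y hy
    simp only [Finset.coe_Icc, Set.mem_Icc]
    by_contra hc
    push_neg at hc
    apply hy
    by_cases h : y < L
    · have : y ≤ L - 1 := by omega
      simp only [hW]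
      rw [h0 d₁ y (by omega), h0 (d₁ - 1) y (by omega), h0 d₁ (y - 1) (by omega),
        h0 (d₁ - 1) (y - 1) (by omega)]
      ring
    · have hy' : U < y := hc (by omega)
      have hby : b ≤ d₁ - 1 + (y - 1) := by omega
      simp only [hW]
      rw [hb d₁ y (by omega), hb (d₁ - 1) y (by omega), hb d₁ (y - 1) (by omega),
        hb (d₁ - 1) (y - 1) hby]
      ring
  rw [finsum_eq_finset_sum_of_support_subset W hsupp]
  have : ∑ y ∈ Finset.Icc L U, W y
      = ∑ y ∈ Finset.Icc L U, ((fun z => F d₁ z - F (d₁ - 1) z) y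
          - (fun z => F d₁ z - F (d₁ - 1) z) (y - 1)) := by
    apply Finset.sum_congr rfl
    intro y _
    simp only [hW]
    ring
  rw [this, hU, tele]
  have hgU : F d₁ (L + n) - F (d₁ - 1) (L + n) = 1 := by
    rw [hb d₁ (L + n) (by omega), hb (d₁ - 1) (L + n) (by omega)]
    ring
  have hgL : F d₁ (L - 1) - F (d₁ - 1) (L - 1) = 0 := by
    rw [h0 d₁ (L - 1) (by omega), h0 (d₁ - 1) (L - 1) (by omega)]
    ring
  omega

theorem stmt12 (f : (Fin 2 → ℤ) → ℤ) (hf0 : InitiallyZero f) (C : ℤ)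
    (hev : ∃ b : ℤ, ∀ d, b ≤ deg d → f d = deg d + C) :
    (∀ d₁ : ℤ, ∑ᶠ d₂ : ℤ, mob f ![d₁, d₂] = 1) ∧
    (∀ d₂ : ℤ, ∑ᶠ d₁ : ℤ, mob f ![d₁, d₂] = 1) := by
  obtain ⟨a, ha⟩ := hf0
  obtain ⟨b, hbv⟩ := hev
  have hdeg : ∀ x y : ℤ, deg ![x, y] = x + y := by
    intro x y; simp [deg, Fin.sum_univ_two]
  constructor
  · intro d₁
    have h0 : ∀ x y : ℤ, x + y ≤ a → f ![x, y] = 0 := fun x y h =>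
      ha _ (by rw [hdeg]; exact h)
    have hb : ∀ x y : ℤ, b ≤ x + y → f ![x, y] = x + y + C := fun x y h => by
      rw [hbv _ (by rw [hdeg]; exact h), hdeg]
    have := key_s12 (fun x y => f ![x, y]) a h0 C b hb d₁
    rw [← this]
    exact finsum_congr fun y => by rw [mob2]
  · intro d₂
    have h0 : ∀ x y : ℤ, x + y ≤ a → f ![y, x] = 0 := fun x y h =>
      ha _ (by rw [hdeg]; omega)
    have hb : ∀ x y : ℤ, b ≤ x + y → f ![y, x] = x + y + C := fun x y h => by
      rw [hbv _ (by rw [hdeg]; omega), hdeg]; ring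
    have := key_s12 (fun x y => f ![y, x]) a h0 C b hb d₂
    rw [← this]
    exact finsum_congr fun y => by rw [mob2]; ring
end

section
/- Let f: ℤ² → ℤ be a slowly growing Riemann function whose weight W = 𝔪f is everywhere nonnegative. Then W is a perfect matching: there exists a bijection π: ℤ → ℤ such that W(i,j) = 1 if j = π(i) and W(i,j) = 0 otherwise. -/
open scoped BigOperators

/- ---- auxiliary lemmas ---- -/

lemma mob_two (f : (Fin 2 → ℤ) → ℤ) (d : Fin 2 → ℤ) :
    mob f d = f (d - eI ∅) - f (d - eI {0}) - f (d - eI {1}) + f (d - eI {0,1}) := by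
  have huniv : (Finset.univ : Finset (Finset (Fin 2))) = {∅, {0}, {1}, {0,1}} := by decide
  rw [mob, huniv]
  rw [show ({∅, {0}, {1}, {0,1}} : Finset (Finset (Fin 2))) =
      insert ∅ (insert {0} (insert {1} {{0,1}})) from rfl]
  rw [Finset.sum_insert (by decide), Finset.sum_insert (by decide),
    Finset.sum_insert (by decide), Finset.sum_singleton]
  simp [Finset.card_insert_of_notMem]
  ring

lemma vec_sub_empty (i j : ℤ) : ![i,j] - eI (∅ : Finset (Fin 2)) = ![i,j] := by
  funext k; fin_cases k <;> simp [eI]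

lemma vec_sub_e0 (i j : ℤ) : ![i,j] - eI ({0} : Finset (Fin 2)) = ![i-1,j] := by
  funext k; fin_cases k <;> simp [eI]

lemma vec_sub_e1 (i j : ℤ) : ![i,j] - eI ({1} : Finset (Fin 2)) = ![i,j-1] := by
  funext k; fin_cases k <;> simp [eI]

lemma vec_sub_e01 (i j : ℤ) : ![i,j] - eI ({0,1} : Finset (Fin 2)) = ![i-1,j-1] := by
  funext k; fin_cases k <;> simp [eI]

lemma vec_add_s0 (i j : ℤ) : ![i,j] + stdB (0 : Fin 2) = ![i+1,j] := by
  funext k; fin_cases k <;> simp [stdB]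

lemma vec_add_s1 (i j : ℤ) : ![i,j] + stdB (1 : Fin 2) = ![i,j+1] := by
  funext k; fin_cases k <;> simp [stdB]

lemma deg_two (i j : ℤ) : deg ![i,j] = i + j := by simp [deg, Fin.sum_univ_two]

lemma mob_two' (f : (Fin 2 → ℤ) → ℤ) (i j : ℤ) :
    mob f ![i,j] = f ![i,j] - f ![i-1,j] - f ![i,j-1] + f ![i-1,j-1] := by
  rw [mob_two, vec_sub_empty, vec_sub_e0, vec_sub_e1, vec_sub_e01]

/-- a monotone integer function with values in {0,1}, eventually 1 and initially 0,
has a unique unit jump -/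
lemma threshold (h : ℤ → ℤ) (mono : Monotone h) (h0 : ∀ j, 0 ≤ h j) (h1 : ∀ j, h j ≤ 1)
    (A : ℤ) (hA : ∀ j ≤ A, h j = 0) (B : ℤ) (hB : ∀ j, B ≤ j → h j = 1) :
    ∃ j₀ : ℤ, ∀ j, h j - h (j-1) = if j = j₀ then 1 else 0 := by
  obtain ⟨j₀, hj₀1, hmin⟩ := Int.exists_least_of_bdd (P := fun z => h z = 1)
    ⟨A + 1, fun z hz => by
      by_contra hlt
      push_neg at hlt
      have := hA z (by omega)
      omega⟩
    ⟨B, hB B le_rfl⟩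
  have hj1 : h j₀ = 1 := hj₀1
  refine ⟨j₀, fun j => ?_⟩
  by_cases hj : j = j₀
  · subst hj
    have hne : h (j - 1) ≠ 1 := fun hc => by have := hmin _ hc; omega
    have hb0 := h0 (j - 1); have hb1 := h1 (j - 1)
    rw [if_pos rfl]
    omega
  · rw [if_neg hj]
    rcases lt_or_gt_of_ne hj with hlt | hgt
    · have hne : h j ≠ 1 := fun hc => by have := hmin _ hc; omega
      have hne' : h (j - 1) ≠ 1 := fun hc => by have := hmin _ hc; omega
      have := h0 j; have := h1 j; have := h0 (j - 1); have := h1 (j - 1)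
      omega
    · have hj1 : h j = 1 := le_antisymm (h1 j) (hj₀1 ▸ mono (by omega))
      have hj2 : h (j - 1) = 1 := le_antisymm (h1 (j - 1)) (hj₀1 ▸ mono (by omega))
      omega

theorem stmt14 (f : (Fin 2 → ℤ) → ℤ) (hf0 : InitiallyZero f) (C : ℤ)
    (hev : ∃ b : ℤ, ∀ d, b ≤ deg d → f d = deg d + C)
    (hslow : ∀ d (i : Fin 2), f d ≤ f (d + stdB i) ∧ f (d + stdB i) ≤ f d + 1)
    (hnonneg : ∀ d, 0 ≤ mob f d) :
    ∃ π : ℤ ≃ ℤ, ∀ i j : ℤ, mob f ![i, j] = if j = π i then 1 else 0 := by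
  obtain ⟨a, ha⟩ := hf0
  obtain ⟨b, hb⟩ := hev
  -- slow growth in explicit coordinates
  have hs0 : ∀ i j : ℤ, f ![i-1,j] ≤ f ![i,j] ∧ f ![i,j] ≤ f ![i-1,j] + 1 := by
    intro i j
    have := hslow ![i-1,j] 0
    rw [vec_add_s0, show i - 1 + 1 = i by ring] at this
    exact this
  have hs1 : ∀ i j : ℤ, f ![i,j-1] ≤ f ![i,j] ∧ f ![i,j] ≤ f ![i,j-1] + 1 := by
    intro i j
    have := hslow ![i,j-1] 1
    rw [vec_add_s1, show j - 1 + 1 = j by ring] at this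
    exact this
  -- row statement: for each i there is a unique column
  have hrow : ∀ i : ℤ, ∃ j₀ : ℤ, ∀ j : ℤ, mob f ![i,j] = if j = j₀ then 1 else 0 := by
    intro i
    set h : ℤ → ℤ := fun j => f ![i,j] - f ![i-1,j] with hh
    have hmob : ∀ j : ℤ, mob f ![i,j] = h j - h (j-1) := by
      intro j; rw [mob_two']; simp only [hh]; ring
    have mono : Monotone h := by
      apply monotone_int_of_le_succ
      intro j
      have := hnonneg ![i, j+1]
      rw [hmob (j+1), show j + 1 - 1 = j by ring] at this
      omega
    obtain ⟨j₀, hj₀⟩ := threshold h mono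
      (fun j => by have := (hs0 i j).1; simp only [hh]; omega)
      (fun j => by have := (hs0 i j).2; simp only [hh]; omega)
      (a - i) (fun j hj => by
        have h1 := ha ![i,j] (by rw [deg_two]; omega)
        have h2 := ha ![i-1,j] (by rw [deg_two]; omega)
        simp only [hh]; omega)
      (b - i + 1) (fun j hj => by
        have h1 := hb ![i,j] (by rw [deg_two]; omega)
        have h2 := hb ![i-1,j] (by rw [deg_two]; omega)
        rw [deg_two] at h1 h2
        simp only [hh]; omega)
    exact ⟨j₀, fun j => by rw [hmob j, hj₀ j]⟩
  -- column statement: for each j there is a unique row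
  have hcol : ∀ j : ℤ, ∃ i₀ : ℤ, ∀ i : ℤ, mob f ![i,j] = if i = i₀ then 1 else 0 := by
    intro j
    set g : ℤ → ℤ := fun i => f ![i,j] - f ![i,j-1] with hg
    have hmob : ∀ i : ℤ, mob f ![i,j] = g i - g (i-1) := by
      intro i; rw [mob_two']; simp only [hg]; ring
    have mono : Monotone g := by
      apply monotone_int_of_le_succ
      intro i
      have := hnonneg ![i+1, j]
      rw [hmob (i+1), show i + 1 - 1 = i by ring] at this
      omega
    obtain ⟨i₀, hi₀⟩ := threshold g mono
      (fun i => by have := (hs1 i j).1; simp only [hg]; omega)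
      (fun i => by have := (hs1 i j).2; simp only [hg]; omega)
      (a - j) (fun i hi => by
        have h1 := ha ![i,j] (by rw [deg_two]; omega)
        have h2 := ha ![i,j-1] (by rw [deg_two]; omega)
        simp only [hg]; omega)
      (b - j + 1) (fun i hi => by
        have h1 := hb ![i,j] (by rw [deg_two]; omega)
        have h2 := hb ![i,j-1] (by rw [deg_two]; omega)
        rw [deg_two] at h1 h2
        simp only [hg]; omega)
    exact ⟨i₀, fun i => by rw [hmob i, hi₀ i]⟩
  choose π hπ using hrow
  choose σ hσ using hcol
  refine ⟨⟨π, σ, fun i => ?_, fun j => ?_⟩, fun i j => hπ i j⟩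
  · -- σ (π i) = i
    have h1 : mob f ![i, π i] = 1 := by rw [hπ i (π i), if_pos rfl]
    have h2 := hσ (π i) i
    rw [h1] at h2
    by_contra hne
    rw [if_neg (fun hc => hne hc.symm)] at h2
    exact absurd h2 (by norm_num)
  · -- π (σ j) = j
    have h1 : mob f ![σ j, j] = 1 := by rw [hσ j (σ j), if_pos rfl]
    have h2 := hπ (σ j) j
    rw [h1] at h2
    by_contra hne
    rw [if_neg (fun hc => hne hc.symm)] at h2
    exact absurd h2 (by norm_num)
end

section
/- Let G be the graph on two vertices v₁, v₂ joined by r ≥ 1 parallel edges, f = 1 + r_BN its Baker-Norine rank plus one, and W = 𝔪f. Then W(d) = 1 if d is equivalent modulo the image of the Laplacian (i.e., modulo integer multiples of (r,-r)) to (i,i) for some i ∈ {0,…,r-1}, and W(d) = 0 otherwise. -/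
open scoped BigOperators

/-- equivalence modulo the Laplacian image ℤ·(r,-r) of the two-vertex graph -/
def equiv2 (r : ℕ) (d d' : Fin 2 → ℤ) : Prop :=
  ∃ k : ℤ, d 0 - d' 0 = k * r ∧ d 1 - d' 1 = -(k * r)

/-- divisors not equivalent to an effective divisor -/
def N2 (r : ℕ) : Set (Fin 2 → ℤ) :=
  {d | ¬ ∃ d' : Fin 2 → ℤ, (∀ j, 0 ≤ d' j) ∧ equiv2 r d d'}

/-!
Write `dᵢ = qᵢ r + sᵢ` with `0 ≤ sᵢ < r`. Moving along the Laplacian lattice shows that `d`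
is equivalent to an effective divisor iff `q₀ + q₁ ≥ 0`, so `𝒩` is cut out by `q₀ + q₁ < 0`.
With `q = q₀ + q₁`, pushing `d` into `𝒩` means lowering `q` by `q + 1`; lowering `qᵢ` the first
time costs `sᵢ + 1` and each further time costs `r ≥ sᵢ + 1`, which gives a closed form for `f`
(`rankSuccTwo`). From it, `f(d) - f(d - e₁) = [q > 0 ∨ (q = 0 ∧ s₀ ≤ s₁)]`, and differencing
once more in the second coordinate leaves the indicator of `q = 0 ∧ s₀ = s₁`, which says
exactly that `d ∼ (s₀, s₀)`.
-/

section IntDiv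

variable {a b q r s j : ℤ}

lemma ediv_emod_of_eq_mul_add (hs : 0 ≤ s) (hsr : s < r) (h : a = q * r + s) :
    a / r = q ∧ a % r = s :=
  (Int.ediv_emod_unique (hs.trans_lt hsr)).2 ⟨by rw [h]; ring, hs, hsr⟩

lemma sub_one_ediv_emod_of_emod_eq_zero (hr : 0 < r) (h : a % r = 0) :
    (a - 1) / r = a / r - 1 ∧ (a - 1) % r = r - 1 :=
  ediv_emod_of_eq_mul_add (by omega) (by omega)
    (by linear_combination (Int.ediv_mul_add_emod a r).symm + h)

lemma sub_one_ediv_emod_of_emod_ne_zero (hr : 0 < r) (h : a % r ≠ 0) :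
    (a - 1) / r = a / r ∧ (a - 1) % r = a % r - 1 :=
  ediv_emod_of_eq_mul_add (by have := Int.emod_nonneg a hr.ne'; omega)
    (by have := Int.emod_lt_of_pos a hr; omega)
    (by linear_combination (Int.ediv_mul_add_emod a r).symm)

lemma sub_emod_sub_one_sub_mul_ediv (hr : 0 < r) (m : ℤ) :
    (a - (a % r + 1) - m * r) / r = a / r - 1 - m :=
  (ediv_emod_of_eq_mul_add (s := r - 1) (by omega) (by omega)
    (by linear_combination (Int.ediv_mul_add_emod a r).symm)).1

lemma le_sub_of_ediv_add_le_ediv (hr : 0 < r) (h : b / r + j ≤ a / r) :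
    (j - 1) * r + a % r + 1 ≤ a - b := by
  have ha := Int.ediv_mul_add_emod a r
  have hb := Int.ediv_mul_add_emod b r
  have hbr := Int.emod_lt_of_pos b hr
  have hjr : j * r ≤ (a / r - b / r) * r := mul_le_mul_of_nonneg_right (by omega) hr.le
  linarith

end IntDiv

lemma distTo_eq_of_isLeast {n : ℕ} {N : Set (Fin n → ℤ)} {d : Fin n → ℤ} {m : ℤ}
    (h : IsLeast {k | ∃ d' ∈ N, ∑ i, |d i - d' i| = k} m) : (distTo N d : ℤ) = m := by
  obtain ⟨⟨d', hd', rfl⟩, hle⟩ := h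
  have hcast : ∀ e : Fin n → ℤ, ((∑ i, (d i - e i).natAbs : ℕ) : ℤ) = ∑ i, |d i - e i| := by
    intro e; push_cast [Int.natCast_natAbs]; rfl
  rw [← hcast]
  congr 1
  refine le_antisymm (Nat.sInf_le ⟨d', hd', rfl⟩) (le_csInf ⟨_, d', hd', rfl⟩ ?_)
  rintro k ⟨e, he, rfl⟩
  exact_mod_cast (hcast d').trans_le ((hle ⟨e, he, rfl⟩).trans_eq (hcast e).symm)

lemma mob_fin_two (f : (Fin 2 → ℤ) → ℤ) (d : Fin 2 → ℤ) :
    mob f d = (f d - f (d - eI {0})) - (f (d - eI {1}) - f (d - eI {1} - eI {0})) := by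
  have huniv : (Finset.univ : Finset (Finset (Fin 2))) = {∅, {0}, {1}, Finset.univ} := by decide
  have hpair : d - eI Finset.univ = d - eI {1} - eI {0} := by
    funext i; fin_cases i <;> simp [eI]
  have hempty : d - eI ∅ = d := by funext i; simp [eI]
  rw [mob, huniv, Finset.sum_insert (by decide), Finset.sum_insert (by decide),
    Finset.sum_insert (by decide), Finset.sum_singleton, hempty, hpair]
  simp only [Finset.card_empty, Finset.card_singleton, Finset.card_univ, Fintype.card_fin, pow_zero,
    pow_one, even_two, Even.neg_pow, one_pow, one_mul, neg_mul]
  ring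

/-- `f(d)` on the two-vertex graph in terms of `q = ⌊d₀/r⌋ + ⌊d₁/r⌋`, `s = d₀ % r`, `t = d₁ % r`. -/
def rankSuccTwo (r q s t : ℤ) : ℤ :=
  if q < 0 then 0 else if q = 0 then min s t + 1 else s + t + 2 + (q - 1) * r

lemma rankSuccTwo_sub_pred (r q s t : ℤ) (hs : 0 ≤ s) (ht : 0 ≤ t) (htr : t < r) :
    rankSuccTwo r q s t -
        (if s = 0 then rankSuccTwo r (q - 1) (r - 1) t else rankSuccTwo r q (s - 1) t) =
      if 0 < q ∨ q = 0 ∧ s ≤ t then 1 else 0 := by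
  unfold rankSuccTwo
  rcases (by omega : q < 1 ∨ q = 1 ∨ 2 ≤ q) with hq | rfl | hq <;> simp only [min_def] <;>
    split_ifs <;> first | omega | linarith

section TwoVertex

variable {r : ℕ}

lemma mem_N2_iff (hr : 0 < r) {d : Fin 2 → ℤ} : d ∈ N2 r ↔ d 0 / r + d 1 / r < 0 := by
  have hr' : (0 : ℤ) < r := by exact_mod_cast hr
  constructor
  · intro hd
    by_contra! hq
    refine hd ⟨![d 0 % r, d 1 + d 0 / r * r], ?_, d 0 / r, ?_, ?_⟩
    · intro j
      fin_cases j
      · exact Int.emod_nonneg _ hr'.ne'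
      · have := Int.ediv_mul_add_emod (d 1) r
        have := Int.emod_nonneg (d 1) hr'.ne'
        have : -(d 1 / r) * r ≤ d 0 / r * r := mul_le_mul_of_nonneg_right (by omega) hr'.le
        simp only [Fin.mk_one, Fin.isValue, Matrix.cons_val_one, Matrix.cons_val_fin_one]
        linarith
    · have := Int.ediv_mul_add_emod (d 0) r
      simp only [Fin.isValue, Matrix.cons_val_zero]
      linarith
    · simp
  · rintro hq ⟨d', hd', k, hk0, hk1⟩
    have h0 : d 0 / r = d' 0 / r + k := by
      rw [show d 0 = d' 0 + k * r by linarith, Int.add_mul_ediv_right _ _ hr'.ne']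
    have h1 : d 1 / r = d' 1 / r + -k := by
      rw [show d 1 = d' 1 + -k * r by linarith, Int.add_mul_ediv_right _ _ hr'.ne']
    have := Int.ediv_nonneg (hd' 0) hr'.le
    have := Int.ediv_nonneg (hd' 1) hr'.le
    omega

lemma rankSuccTwo_le_of_mem_N2 (hr : 0 < r) (d : Fin 2 → ℤ) {d' : Fin 2 → ℤ} (hd' : d' ∈ N2 r) :
    rankSuccTwo r (d 0 / r + d 1 / r) (d 0 % r) (d 1 % r) ≤ |d 0 - d' 0| + |d 1 - d' 1| := by
  have hr' : (0 : ℤ) < r := by exact_mod_cast hr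
  have hd'q := (mem_N2_iff hr).1 hd'
  have hs := Int.emod_lt_of_pos (d 0) hr'
  have ht := Int.emod_lt_of_pos (d 1) hr'
  have cost0 : ∀ j, d' 0 / r + j ≤ d 0 / r → (j - 1) * r + d 0 % r + 1 ≤ |d 0 - d' 0| :=
    fun j h => (le_sub_of_ediv_add_le_ediv hr' h).trans (le_abs_self _)
  have cost1 : ∀ k, d' 1 / r + k ≤ d 1 / r → (k - 1) * r + d 1 % r + 1 ≤ |d 1 - d' 1| :=
    fun k h => (le_sub_of_ediv_add_le_ediv hr' h).trans (le_abs_self _)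
  have := abs_nonneg (d 0 - d' 0)
  have := abs_nonneg (d 1 - d' 1)
  unfold rankSuccTwo
  split_ifs with hneg hzero
  · positivity
  · rcases (by omega : d' 0 / r + 1 ≤ d 0 / r ∨ d' 1 / r + 1 ≤ d 1 / r) with h | h
    · linarith [cost0 1 h, min_le_left (d 0 % r) (d 1 % r)]
    · linarith [cost1 1 h, min_le_right (d 0 % r) (d 1 % r)]
  · set j := d 0 / r - d' 0 / r
    set k := d 1 / r - d' 1 / r
    have hjk : d 0 / r + d 1 / r + 1 ≤ j + k := by omega
    rcases le_or_gt j 0 with hj | hj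
    · have := cost1 k (by omega)
      linarith [mul_nonneg (by omega : (0 : ℤ) ≤ k - 1 - (d 0 / r + d 1 / r)) hr'.le]
    rcases le_or_gt k 0 with hk | hk
    · have := cost0 j (by omega)
      linarith [mul_nonneg (by omega : (0 : ℤ) ≤ j - 1 - (d 0 / r + d 1 / r)) hr'.le]
    · have := cost0 j (by omega)
      have := cost1 k (by omega)
      linarith [mul_nonneg (by omega : (0 : ℤ) ≤ j + k - 1 - (d 0 / r + d 1 / r)) hr'.le]

lemma exists_mem_N2_dist_eq_rankSuccTwo (hr : 0 < r) (d : Fin 2 → ℤ) :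
    ∃ d' ∈ N2 r, |d 0 - d' 0| + |d 1 - d' 1| =
      rankSuccTwo r (d 0 / r + d 1 / r) (d 0 % r) (d 1 % r) := by
  have hr' : (0 : ℤ) < r := by exact_mod_cast hr
  have hs := Int.emod_nonneg (d 0) hr'.ne'
  have ht := Int.emod_nonneg (d 1) hr'.ne'
  have hlower : ∀ i, (d i - (d i % r + 1)) / r = d i / r - 1 := fun i => by
    simpa using sub_emod_sub_one_sub_mul_ediv (a := d i) hr' 0
  have := hlower 0
  have := hlower 1
  unfold rankSuccTwo
  split_ifs with hneg hzero
  · exact ⟨d, (mem_N2_iff hr).2 hneg, by simp⟩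
  · rcases le_total (d 0 % r) (d 1 % r) with hst | hst
    · refine ⟨![d 0 - (d 0 % r + 1), d 1], (mem_N2_iff hr).2 ?_, ?_⟩
      · show (d 0 - (d 0 % r + 1)) / r + d 1 / r < 0
        omega
      · simp [abs_of_nonneg (by omega : 0 ≤ d 0 % r + 1), hst]
    · refine ⟨![d 0, d 1 - (d 1 % r + 1)], (mem_N2_iff hr).2 ?_, ?_⟩
      · show d 0 / r + (d 1 - (d 1 % r + 1)) / r < 0
        omega
      · simp [abs_of_nonneg (by omega : 0 ≤ d 1 % r + 1), hst]
  · set q := d 0 / r + d 1 / r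
    refine ⟨![d 0 - (d 0 % r + 1), d 1 - (d 1 % r + 1) - (q - 1) * r], (mem_N2_iff hr).2 ?_, ?_⟩
    · show (d 0 - (d 0 % r + 1)) / r + (d 1 - (d 1 % r + 1) - (q - 1) * r) / r < 0
      rw [hlower 0, sub_emod_sub_one_sub_mul_ediv hr']
      omega
    · have : 0 ≤ (q - 1) * r := mul_nonneg (by omega) hr'.le
      simp only [Fin.isValue, Matrix.cons_val_zero, Matrix.cons_val_one, Matrix.cons_val_fin_one]
      rw [abs_of_nonneg (by linarith), abs_of_nonneg (by linarith)]
      ring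

lemma distTo_N2_eq (hr : 0 < r) (d : Fin 2 → ℤ) :
    (distTo (N2 r) d : ℤ) = rankSuccTwo r (d 0 / r + d 1 / r) (d 0 % r) (d 1 % r) := by
  obtain ⟨d', hd', h⟩ := exists_mem_N2_dist_eq_rankSuccTwo hr d
  refine distTo_eq_of_isLeast ⟨⟨d', hd', by simpa [Fin.sum_univ_two] using h⟩, ?_⟩
  rintro _ ⟨e, he, rfl⟩
  simpa [Fin.sum_univ_two] using rankSuccTwo_le_of_mem_N2 hr d he

lemma distTo_N2_sub_distTo_N2_sub_single_zero (hr : 0 < r) (d : Fin 2 → ℤ) :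
    (distTo (N2 r) d : ℤ) - distTo (N2 r) (d - eI {0}) =
      if 0 < d 0 / r + d 1 / r ∨ d 0 / r + d 1 / r = 0 ∧ d 0 % r ≤ d 1 % r then 1 else 0 := by
  have hr' : (0 : ℤ) < r := by exact_mod_cast hr
  have h0 : (d - eI {0} : Fin 2 → ℤ) 0 = d 0 - 1 := by simp [eI]
  have h1 : (d - eI {0} : Fin 2 → ℤ) 1 = d 1 := by simp [eI]
  rw [distTo_N2_eq hr, distTo_N2_eq hr, h0, h1,
    ← rankSuccTwo_sub_pred r _ _ _ (Int.emod_nonneg _ hr'.ne') (Int.emod_nonneg _ hr'.ne')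
      (Int.emod_lt_of_pos _ hr')]
  congr 1
  split_ifs with hs
  · obtain ⟨hq, hs'⟩ := sub_one_ediv_emod_of_emod_eq_zero hr' hs
    rw [hq, hs', sub_add_eq_add_sub]
  · obtain ⟨hq, hs'⟩ := sub_one_ediv_emod_of_emod_ne_zero hr' hs
    rw [hq, hs']

lemma mob_distTo_N2 (hr : 0 < r) (d : Fin 2 → ℤ) :
    mob (fun x => (distTo (N2 r) x : ℤ)) d =
      if d 0 / r + d 1 / r = 0 ∧ d 0 % r = d 1 % r then 1 else 0 := by
  have hr' : (0 : ℤ) < r := by exact_mod_cast hr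
  have h0 : (d - eI {1} : Fin 2 → ℤ) 0 = d 0 := by simp [eI]
  have h1 : (d - eI {1} : Fin 2 → ℤ) 1 = d 1 - 1 := by simp [eI]
  have := Int.emod_nonneg (d 0) hr'.ne'
  have := Int.emod_lt_of_pos (d 0) hr'
  rw [mob_fin_two, distTo_N2_sub_distTo_N2_sub_single_zero hr,
    distTo_N2_sub_distTo_N2_sub_single_zero hr, h0, h1]
  by_cases ht : d 1 % r = 0
  · obtain ⟨hq, ht'⟩ := sub_one_ediv_emod_of_emod_eq_zero hr' ht
    rw [hq, ht']
    split_ifs <;> omega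
  · obtain ⟨hq, ht'⟩ := sub_one_ediv_emod_of_emod_ne_zero hr' ht
    rw [hq, ht']
    split_ifs <;> omega

lemma exists_equiv2_const_iff (hr : 0 < r) (d : Fin 2 → ℤ) :
    (∃ i : ℕ, i < r ∧ equiv2 r d (fun _ => (i : ℤ))) ↔
      d 0 / r + d 1 / r = 0 ∧ d 0 % r = d 1 % r := by
  have hr' : (0 : ℤ) < r := by exact_mod_cast hr
  constructor
  · rintro ⟨i, hi, k, hk0, hk1⟩
    simp only at hk0 hk1
    have hi' : (i : ℤ) < r := by exact_mod_cast hi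
    obtain ⟨hq0, hs⟩ := ediv_emod_of_eq_mul_add (a := d 0) (q := k) i.cast_nonneg hi' (by linarith)
    obtain ⟨hq1, ht⟩ :=
      ediv_emod_of_eq_mul_add (a := d 1) (q := -k) i.cast_nonneg hi' (by linarith)
    omega
  · rintro ⟨hq, hst⟩
    have hs := Int.emod_nonneg (d 0) hr'.ne'
    refine ⟨(d 0 % r).toNat, by have := Int.emod_lt_of_pos (d 0) hr'; omega, d 0 / r, ?_, ?_⟩
    · rw [Int.toNat_of_nonneg hs]
      linear_combination -Int.ediv_mul_add_emod (d 0) r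
    · rw [Int.toNat_of_nonneg hs, hst]
      linear_combination -Int.ediv_mul_add_emod (d 1) r + r * hq

end TwoVertex

theorem stmt15 (r : ℕ) (hr : 1 ≤ r) :
    ∀ d : Fin 2 → ℤ,
      ((∃ i : ℕ, i < r ∧ equiv2 r d (fun _ => (i : ℤ))) →
        mob (fun x => (distTo (N2 r) x : ℤ)) d = 1) ∧
      (¬ (∃ i : ℕ, i < r ∧ equiv2 r d (fun _ => (i : ℤ))) →
        mob (fun x => (distTo (N2 r) x : ℤ)) d = 0) := by
  intro d
  rw [mob_distTo_N2 hr, exists_equiv2_const_iff hr]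
  exact ⟨fun h => if_pos h, fun h => if_neg h⟩
end

section
/- Let Kₙ be the complete graph on vertices [n] and r_BN its Baker-Norine rank. If a ∈ ℤ^n satisfies a ≥ 0 and a_{n-1} = 0, then r_BN(a) = r_BN(a - e_{n-1}) + 1. -/
open scoped BigOperators

/-- equivalence modulo the image of the Laplacian of the complete graph Kₙ:
the Laplacian sends `x` to `fun i => n * x i - ∑ j, x j`. -/
def lapEquiv (n : ℕ) (d d' : Fin n → ℤ) : Prop :=
  ∃ x : Fin n → ℤ, ∀ i, d i - d' i = (n : ℤ) * x i - ∑ j, x j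

/-- divisors of Kₙ not equivalent to an effective divisor -/
def NKn (n : ℕ) : Set (Fin n → ℤ) :=
  {d | ¬ ∃ d' : Fin n → ℤ, (∀ i, 0 ≤ d' i) ∧ lapEquiv n d d'}

/-- the Baker–Norine rank of the complete graph Kₙ -/
noncomputable def rBN (n : ℕ) (d : Fin n → ℤ) : ℤ :=
  (distTo (NKn n) d : ℤ) - 1

namespace S16

def Sf (n : ℕ) (d : Fin n → ℤ) (c : ℤ) : ℤ := ∑ i, (d i - c) % n

def slk (n : ℕ) (d : Fin n → ℤ) (c : ℤ) : ℤ := Sf n d c - deg d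

def mC (n : ℕ) (d : Fin n → ℤ) (c : ℤ) : ℤ := max 0 (((n : ℤ) - slk n d c) / n)

def Mt (n : ℕ) (d : Fin n → ℤ) : ℤ := ∑ c ∈ Finset.range n, mC n d c

variable {n : ℕ}

lemma emod_le_self {x : ℤ} (hn : (0:ℤ) < n) (hx : 0 ≤ x) : x % n ≤ x := by
  have h1 : x % n = x - n * (x / n) := Int.emod_def _ _
  have h2 : 0 ≤ x / n := Int.ediv_nonneg hx (le_of_lt hn)
  nlinarith

lemma win_iff (hn : 0 < n) (d : Fin n → ℤ) :
    (∃ f : Fin n → ℤ, (∀ i, 0 ≤ f i) ∧ lapEquiv n d f) ↔ ∃ c : ℤ, Sf n d c ≤ deg d := by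
  have hn0 : (0:ℤ) < n := by exact_mod_cast hn
  constructor
  · rintro ⟨f, hf, x, hx⟩
    refine ⟨-∑ j, x j, ?_⟩
    have hdeg : deg d = deg f := by
      have h1 : ∑ i, (d i - f i) = ∑ i : Fin n, ((n:ℤ) * x i - ∑ j, x j) :=
        Finset.sum_congr rfl fun i _ => hx i
      have h2 : ∑ i : Fin n, ((n:ℤ) * x i - ∑ j, x j) = 0 := by
        rw [Finset.sum_sub_distrib, ← Finset.mul_sum, Finset.sum_const, Finset.card_univ,
          Fintype.card_fin, nsmul_eq_mul]
        ring
      rw [Finset.sum_sub_distrib] at h1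
      have : deg d - deg f = 0 := by rw [deg, deg]; omega
      omega
    have hterm : ∀ i, (d i - -∑ j, x j) % n ≤ f i := by
      intro i
      have h3 : d i - -∑ j, x j = f i + (n:ℤ) * x i := by have := hx i; linarith
      rw [h3, Int.add_mul_emod_self_left]
      exact emod_le_self hn0 (hf i)
    calc Sf n d (-∑ j, x j) ≤ ∑ i, f i := Finset.sum_le_sum fun i _ => hterm i
      _ = deg d := hdeg.symm
  · rintro ⟨c, hc⟩
    classical
    set q : Fin n → ℤ := fun i => (d i - c) / n with hq
    set r : Fin n → ℤ := fun i => (d i - c) % n with hr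
    have hqr : ∀ i, d i - c = (n:ℤ) * q i + r i := fun i => (Int.mul_ediv_add_emod _ _).symm
    have hrnn : ∀ i, 0 ≤ r i := fun i => Int.emod_nonneg _ (ne_of_gt hn0)
    set t : ℤ := (∑ i, q i) + c with ht
    have hnt : (n:ℤ) * t = deg d - Sf n d c := by
      have h1 : ∑ i, (d i - c) = ∑ i : Fin n, ((n:ℤ) * q i + r i) :=
        Finset.sum_congr rfl fun i _ => hqr i
      rw [Finset.sum_sub_distrib, Finset.sum_add_distrib, ← Finset.mul_sum,
        Finset.sum_const, Finset.card_univ, Fintype.card_fin, nsmul_eq_mul] at h1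
      rw [ht, Sf, deg]
      have : Sf n d c = ∑ i, r i := rfl
      nlinarith [h1]
    have htnn : 0 ≤ t := by nlinarith [hc]
    set i0 : Fin n := ⟨0, hn⟩ with hi0
    refine ⟨fun i => r i + (if i = i0 then (n:ℤ) * t else 0), fun i => ?_,
      ⟨fun i => q i - (if i = i0 then t else 0), fun i => ?_⟩⟩
    · have := hrnn i
      dsimp only
      split <;> nlinarith
    · have hsum : ∑ j, (q j - if j = i0 then t else 0) = (∑ j, q j) - t := by
        rw [Finset.sum_sub_distrib, Finset.sum_ite_eq' Finset.univ i0 (fun _ => t)]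
        simp
      rw [hsum]
      have h4 := hqr i
      dsimp only
      by_cases h : i = i0
      · rw [if_pos h, if_pos h]; linear_combination h4 - ht
      · rw [if_neg h, if_neg h]; linear_combination h4 - ht

lemma mem_NKn_iff (hn : 0 < n) (d : Fin n → ℤ) :
    d ∈ NKn n ↔ ∀ c : ℤ, deg d < Sf n d c := by
  constructor
  · intro hd c
    by_contra h
    exact hd ((win_iff hn d).mpr ⟨c, not_lt.mp h⟩)
  · intro h hd
    obtain ⟨c, hc⟩ := (win_iff hn d).mp hd
    exact absurd hc (not_le.mpr (h c))

lemma Sf_emod (d : Fin n → ℤ) (c : ℤ) : Sf n d c = Sf n d (c % n) := by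
  unfold Sf
  refine Finset.sum_congr rfl fun i _ => ?_
  rw [Int.sub_emod (d i) c, Int.sub_emod (d i) (c % n), Int.emod_emod_of_dvd _ dvd_rfl]

lemma sum_ediv_range (hn : 0 < n) (x : ℤ) :
    ∑ c ∈ Finset.range n, (x - (c:ℤ)) / n = x - n + 1 := by
  have hn0 : (0:ℤ) < n := by exact_mod_cast hn
  have hx : (n:ℤ) * (x / n) + x % n = x := Int.mul_ediv_add_emod _ _
  set q := x / (n:ℤ) with hqdef
  set r := x % (n:ℤ) with hrdef
  have hr0 : 0 ≤ r := Int.emod_nonneg _ (ne_of_gt hn0)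
  have hrn : r < n := Int.emod_lt_of_pos _ hn0
  set m := r.toNat with hmdef
  have hmr : (m:ℤ) = r := Int.toNat_of_nonneg hr0
  have hmn : m + 1 ≤ n := by omega
  have key : ∀ c ∈ Finset.range n, (x - (c:ℤ)) / n = q + (if c ≤ m then 0 else -1) := by
    intro c hc
    have hcn : (c:ℤ) < n := by exact_mod_cast Finset.mem_range.mp hc
    have h1 : x - (c:ℤ) = (r - c) + (n:ℤ) * q := by linarith
    rw [h1, Int.add_mul_ediv_left _ _ (ne_of_gt hn0)]
    by_cases h : c ≤ m
    · have hcr : (c:ℤ) ≤ r := by omega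
      rw [Int.ediv_eq_zero_of_lt (by linarith) (by linarith), if_pos h]; ring
    · have hcr : r < (c:ℤ) := by omega
      have h2 : r - (c:ℤ) = (r - c + n) + (n:ℤ) * (-1) := by ring
      rw [h2, Int.add_mul_ediv_left _ _ (ne_of_gt hn0),
        Int.ediv_eq_zero_of_lt (by linarith) (by linarith), if_neg h]; ring
  rw [Finset.sum_congr rfl key, Finset.sum_add_distrib, Finset.sum_const, Finset.card_range,
    nsmul_eq_mul]
  have hsplit : ∑ c ∈ Finset.range n, (if c ≤ m then (0:ℤ) else -1) = -((n:ℤ) - (m+1)) := by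
    rw [Finset.range_eq_Ico, ← Finset.sum_Ico_consecutive _ (Nat.zero_le (m+1)) hmn]
    have e1 : ∑ c ∈ Finset.Ico 0 (m+1), (if c ≤ m then (0:ℤ) else -1) = 0 := by
      apply Finset.sum_eq_zero
      intro c hc
      have hcm := (Finset.mem_Ico.mp hc).2
      rw [if_pos (by omega : c ≤ m)]
    have e2 : ∑ c ∈ Finset.Ico (m+1) n, (if c ≤ m then (0:ℤ) else -1) = -((n:ℤ) - (m+1)) := by
      have h3 : ∀ c ∈ Finset.Ico (m+1) n, (if c ≤ m then (0:ℤ) else -1) = -1 := by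
        intro c hc
        have hcm := (Finset.mem_Ico.mp hc).1
        rw [if_neg (by omega : ¬ c ≤ m)]
      rw [Finset.sum_congr rfl h3, Finset.sum_const, Nat.card_Ico, nsmul_eq_mul]
      push_cast [Nat.cast_sub hmn]
      ring
    rw [e1, e2]
    ring
  rw [hsplit]
  linarith

lemma slk_eq (d : Fin n → ℤ) (c : ℤ) :
    slk n d c = -((n:ℤ) * c) - n * ∑ i, (d i - c) / n := by
  unfold slk Sf deg
  have h : ∀ i : Fin n, (d i - c) % n = d i - c - n * ((d i - c)/n) := fun i => Int.emod_def _ _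
  rw [Finset.sum_congr rfl fun i _ => h i, Finset.sum_sub_distrib, Finset.sum_sub_distrib,
    ← Finset.mul_sum, Finset.sum_const, Finset.card_univ, Fintype.card_fin, nsmul_eq_mul]
  ring

lemma lower (hn : 0 < n) (d d'' : Fin n → ℤ) (hd : d'' ∈ NKn n) :
    Mt n d ≤ ∑ i, |d i - d'' i| := by
  have hn0 : (0:ℤ) < n := by exact_mod_cast hn
  have key : ∀ c : ℤ, mC n d c ≤ ∑ i, max 0 ((d i - c)/(n:ℤ) - (d'' i - c)/n) := by
    intro c
    set X := (∑ i, (d i - c)/(n:ℤ)) - ∑ i, (d'' i - c)/(n:ℤ) with hX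
    have hX' : X = ∑ i, ((d i - c)/(n:ℤ) - (d'' i - c)/n) := by
      rw [hX, Finset.sum_sub_distrib]
    have h1 : slk n d'' c = slk n d c + (n:ℤ) * X := by
      rw [slk_eq, slk_eq, hX]; ring
    have h2 : 1 ≤ slk n d'' c := by
      have h := (mem_NKn_iff hn d'').mp hd c
      simp only [slk]; omega
    have h3 : ((n:ℤ) - slk n d c) / n ≤ X := by
      have hlt : (n:ℤ) - slk n d c < (X + 1) * n := by nlinarith
      have h4 := (Int.ediv_lt_iff_lt_mul hn0).mpr hlt
      omega
    refine (max_le_max (le_refl (0:ℤ)) h3).trans ?_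
    exact max_le (Finset.sum_nonneg fun i _ => le_max_left 0 _)
      (hX' ▸ Finset.sum_le_sum fun i _ => le_max_right 0 _)
  have percoord : ∀ i : Fin n,
      ∑ c ∈ Finset.range n, max 0 ((d i - c)/(n:ℤ) - (d'' i - c)/n) ≤ |d i - d'' i| := by
    intro i
    by_cases hle : d'' i ≤ d i
    · have heq : ∀ c ∈ Finset.range n, max 0 ((d i - c)/(n:ℤ) - (d'' i - c)/n)
          = (d i - c)/(n:ℤ) - (d'' i - c)/n := fun c _ =>
        max_eq_right (sub_nonneg.mpr (Int.ediv_le_ediv hn0 (by linarith)))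
      rw [Finset.sum_congr rfl heq, Finset.sum_sub_distrib, sum_ediv_range hn,
        sum_ediv_range hn, abs_of_nonneg (by linarith : (0:ℤ) ≤ d i - d'' i)]
      omega
    · have heq : ∀ c ∈ Finset.range n, max 0 ((d i - c)/(n:ℤ) - (d'' i - c)/n) = 0 :=
        fun c _ => max_eq_left (sub_nonpos.mpr (Int.ediv_le_ediv hn0 (by linarith)))
      rw [Finset.sum_congr rfl heq, Finset.sum_const, smul_zero]
      exact abs_nonneg _
  calc Mt n d ≤ ∑ c ∈ Finset.range n, ∑ i, max 0 ((d i - c)/(n:ℤ) - (d'' i - c)/n) :=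
        Finset.sum_le_sum fun c _ => key c
    _ = ∑ i, ∑ c ∈ Finset.range n, max 0 ((d i - c)/(n:ℤ) - (d'' i - c)/n) := Finset.sum_comm
    _ ≤ ∑ i, |d i - d'' i| := Finset.sum_le_sum fun i _ => percoord i

lemma emod_sub_one (hn0 : (0:ℤ) < n) (x : ℤ) :
    (x - 1) % n = if x % n = 0 then (n:ℤ) - 1 else x % n - 1 := by
  have hx : (n:ℤ) * (x / n) + x % n = x := Int.mul_ediv_add_emod _ _
  have hr0 : 0 ≤ x % n := Int.emod_nonneg _ (ne_of_gt hn0)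
  have hrn : x % n < n := Int.emod_lt_of_pos _ hn0
  by_cases h : x % n = 0
  · rw [if_pos h]
    have h1 : x - 1 = ((n:ℤ) - 1) + n * (x / n - 1) := by linear_combination -hx + h
    rw [h1, Int.add_mul_emod_self_left, Int.emod_eq_of_lt (by linarith) (by linarith)]
  · rw [if_neg h]
    have h1 : x - 1 = (x % n - 1) + (n:ℤ) * (x / n) := by linear_combination -hx
    rw [h1, Int.add_mul_emod_self_left, Int.emod_eq_of_lt (by omega) (by omega)]

lemma deg_update (d : Fin n → ℤ) (i : Fin n) :
    deg (Function.update d i (d i - 1)) = deg d - 1 := by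
  unfold deg
  rw [Finset.sum_update_of_mem (Finset.mem_univ i), ← Finset.erase_eq,
    ← Finset.add_sum_erase _ d (Finset.mem_univ i)]
  ring

lemma Sf_update (hn0 : (0:ℤ) < n) (d : Fin n → ℤ) (i : Fin n) (c : ℤ) :
    Sf n (Function.update d i (d i - 1)) c
      = Sf n d c - 1 + (if (d i - c) % n = 0 then (n:ℤ) else 0) := by
  have hpt : ∀ j, ((Function.update d i (d i - 1)) j - c) % n
      = Function.update (fun j => (d j - c) % (n:ℤ)) i ((d i - 1 - c) % n) j := by
    intro j
    by_cases h : j = i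
    · subst h; simp [Function.update_self]
    · simp [Function.update_of_ne h]
  unfold Sf
  rw [Finset.sum_congr rfl fun j _ => hpt j, Finset.sum_update_of_mem (Finset.mem_univ i),
    ← Finset.erase_eq, ← Finset.add_sum_erase _ (fun j => (d j - c) % (n:ℤ)) (Finset.mem_univ i)]
  have h2 : d i - 1 - c = (d i - c) - 1 := by ring
  rw [h2, emod_sub_one hn0]
  split_ifs with h3
  · rw [h3]; ring
  · ring

lemma slk_update (hn0 : (0:ℤ) < n) (d : Fin n → ℤ) (i : Fin n) (c : ℤ) :
    slk n (Function.update d i (d i - 1)) c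
      = slk n d c + (if (d i - c) % n = 0 then (n:ℤ) else 0) := by
  unfold slk
  rw [Sf_update hn0, deg_update]
  ring

lemma emod_ne_zero {a b : ℤ} (hn0 : (0:ℤ) < n) (ha : 0 ≤ a) (han : a < n) (hb : 0 ≤ b)
    (hbn : b < n) (hne : a ≠ b) : (a - b) % n ≠ 0 := by
  rcases lt_or_gt_of_ne hne with h | h
  · have h1 : a - b = (a - b + n) + (n:ℤ) * (-1) := by ring
    rw [h1, Int.add_mul_emod_self_left, Int.emod_eq_of_lt (by linarith) (by linarith)]
    omega
  · rw [Int.emod_eq_of_lt (by linarith) (by linarith)]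
    omega

lemma mC_pos_slk {d : Fin n → ℤ} {c : ℤ} (hn0 : (0:ℤ) < n) (h : 0 < mC n d c) :
    slk n d c ≤ 0 := by
  unfold mC at h
  by_contra hc
  push_neg at hc
  have h2 : ((n:ℤ) - slk n d c)/n < 1 := (Int.ediv_lt_iff_lt_mul hn0).mpr (by linarith)
  omega

lemma Mt_update (hn : 2 ≤ n) (d : Fin n → ℤ) (i : Fin n) (cs : ℕ) (hcs : cs < n)
    (h0 : (d i - (cs:ℤ)) % n = 0) (hslk : slk n d (cs:ℤ) ≤ 0) :
    Mt n (Function.update d i (d i - 1)) = Mt n d - 1 := by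
  have hn0 : (0:ℤ) < n := by exact_mod_cast (by omega : 0 < n)
  have hmod : ∀ c ∈ Finset.range n, ((d i - (c:ℤ)) % n = 0 ↔ c = cs) := by
    intro c hc
    have hcn : (c:ℤ) < n := by exact_mod_cast Finset.mem_range.mp hc
    have hcsn : ((cs:ℕ):ℤ) < n := by exact_mod_cast hcs
    constructor
    · intro h
      by_contra hne
      have e1 : (d i - (c:ℤ)) % n = ((cs:ℤ) - c) % n := by
        have e0 : d i - (c:ℤ) = ((cs:ℤ) - c) + (d i - cs) := by ring
        rw [e0, Int.add_emod, h0, add_zero, Int.emod_emod_of_dvd _ dvd_rfl]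
      rw [e1] at h
      exact emod_ne_zero hn0 (by positivity) hcsn (by positivity) hcn
        (fun hh => hne (by exact_mod_cast hh.symm)) h
    · intro h; subst h; exact h0
  have hdiff : ∀ c ∈ Finset.range n, mC n d c - mC n (Function.update d i (d i - 1)) c
      = if c = cs then 1 else 0 := by
    intro c hc
    by_cases h : c = cs
    · subst h
      have hsl : slk n (Function.update d i (d i - 1)) (c:ℤ) = slk n d c + n := by
        rw [slk_update hn0, if_pos ((hmod c hc).mpr rfl)]
      unfold mC
      rw [hsl]
      have hslc : slk n d (c:ℤ) ≤ 0 := hslk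
      have e2 : (n:ℤ) - slk n d c = (-(slk n d c)) + (n:ℤ) * 1 := by ring
      have e3 : (n:ℤ) - (slk n d c + n) = -(slk n d c) := by ring
      have e4 : (0:ℤ) ≤ (-(slk n d c))/n := Int.ediv_nonneg (by linarith) (by linarith)
      rw [e2, e3, Int.add_mul_ediv_left _ _ (ne_of_gt hn0), if_pos rfl,
        max_eq_right (by linarith), max_eq_right e4]
      ring
    · have hsl : slk n (Function.update d i (d i - 1)) (c:ℤ) = slk n d c := by
        rw [slk_update hn0, if_neg, add_zero]
        exact fun hh => h ((hmod c hc).mp hh)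
      unfold mC
      rw [hsl, if_neg h]
      ring
  have hsum : Mt n d - Mt n (Function.update d i (d i - 1)) = 1 := by
    rw [Mt, Mt, ← Finset.sum_sub_distrib, Finset.sum_congr rfl hdiff,
      Finset.sum_ite_eq' (Finset.range n) cs (fun _ => (1:ℤ)),
      if_pos (Finset.mem_range.mpr hcs)]
  linarith

lemma Mt_nonneg (d : Fin n → ℤ) : 0 ≤ Mt n d :=
  Finset.sum_nonneg fun c _ => le_max_left _ _

lemma upper (hn : 2 ≤ n) : ∀ k : ℕ, ∀ d : Fin n → ℤ, Mt n d = (k:ℤ) →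
    ∃ d'' ∈ NKn n, ∑ i, |d i - d'' i| ≤ (k:ℤ) := by
  have hnpos : 0 < n := by omega
  have hn0 : (0:ℤ) < n := by exact_mod_cast hnpos
  intro k
  induction k with
  | zero =>
    intro d hd
    refine ⟨d, ?_, by simp⟩
    rw [mem_NKn_iff hnpos]
    intro c
    have hall : ∀ c' ∈ Finset.range n, mC n d (c':ℤ) = 0 :=
      (Finset.sum_eq_zero_iff_of_nonneg (fun c' _ => le_max_left _ _)).mp hd
    set c' := (c % n).toNat with hc'
    have hcm0 : 0 ≤ c % n := Int.emod_nonneg _ (ne_of_gt hn0)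
    have hcmn : c % n < n := Int.emod_lt_of_pos _ hn0
    have hc'' : ((c':ℕ):ℤ) = c % n := Int.toNat_of_nonneg hcm0
    have hmem : c' ∈ Finset.range n := Finset.mem_range.mpr (by omega)
    have h1 : mC n d (c':ℤ) = 0 := hall c' hmem
    have h2 : 1 ≤ slk n d (c':ℤ) := by
      by_contra h
      push_neg at h
      have h3 : (1:ℤ) ≤ ((n:ℤ) - slk n d c')/n :=
        (Int.le_ediv_iff_mul_le hn0).mpr (by linarith)
      unfold mC at h1
      omega
    have h3 : Sf n d c = Sf n d (c':ℤ) := by rw [Sf_emod d c, hc'']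
    unfold slk at h2
    omega
  | succ k ih =>
    intro d hd
    have hex : ∃ c0 ∈ Finset.range n, 0 < mC n d (c0:ℤ) := by
      by_contra h
      push_neg at h
      have h1 : Mt n d ≤ 0 := Finset.sum_nonpos fun c hc => h c hc
      have h2 : (0:ℤ) < ((k:ℕ):ℤ) + 1 := by positivity
      push_cast at hd
      omega
    obtain ⟨c0, hc0mem, hc0⟩ := hex
    have hslk0 : slk n d (c0:ℤ) ≤ 0 := mC_pos_slk hn0 hc0
    obtain ⟨cs, hcsmem, hcsmin⟩ := Finset.exists_min_image (Finset.range n)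
      (fun c : ℕ => slk n d (c:ℤ)) ⟨c0, hc0mem⟩
    have hcs : cs < n := Finset.mem_range.mp hcsmem
    have hslks : slk n d (cs:ℤ) ≤ 0 := le_trans (hcsmin c0 hc0mem) hslk0
    have hexi : ∃ i : Fin n, (d i - (cs:ℤ)) % n = 0 := by
      by_contra h
      push_neg at h
      have hstep : Sf n d ((cs:ℤ) + 1) = Sf n d (cs:ℤ) - n := by
        unfold Sf
        have hterm : ∀ i : Fin n, (d i - ((cs:ℤ)+1)) % n = (d i - cs) % n - 1 := by
          intro i
          have e : d i - ((cs:ℤ)+1) = (d i - cs) - 1 := by ring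
          rw [e, emod_sub_one hn0, if_neg (h i)]
        rw [Finset.sum_congr rfl fun i _ => hterm i, Finset.sum_sub_distrib,
          Finset.sum_const, Finset.card_univ, Fintype.card_fin, nsmul_eq_mul, mul_one]
      set cs' := (cs + 1) % n with hcs'
      have hc1 : ((cs':ℕ):ℤ) = ((cs:ℤ)+1) % n := by push_cast [hcs']; ring_nf
      have hmem' : cs' ∈ Finset.range n := Finset.mem_range.mpr (Nat.mod_lt _ hnpos)
      have h4 : Sf n d ((cs:ℤ)+1) = Sf n d (cs':ℤ) := by rw [Sf_emod d ((cs:ℤ)+1), hc1]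
      have h5 : slk n d (cs':ℤ) = slk n d (cs:ℤ) - n := by
        unfold slk
        rw [← h4, hstep]
        ring
      have h6 := hcsmin cs' hmem'
      omega
    obtain ⟨i, hi⟩ := hexi
    have hMt' : Mt n (Function.update d i (d i - 1)) = (k:ℤ) := by
      rw [Mt_update hn d i cs hcs hi hslks]
      push_cast at hd ⊢
      linarith
    obtain ⟨d'', hd''N, hd''⟩ := ih (Function.update d i (d i - 1)) hMt'
    refine ⟨d'', hd''N, ?_⟩
    have hpt : ∀ j : Fin n, |d j - d'' j|
        ≤ |Function.update d i (d i - 1) j - d'' j| + (if j = i then 1 else 0) := by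
      intro j
      by_cases h : j = i
      · subst h
        rw [Function.update_self, if_pos rfl]
        have e : d j - d'' j = (d j - 1 - d'' j) + 1 := by ring
        calc |d j - d'' j| = |(d j - 1 - d'' j) + 1| := by rw [← e]
          _ ≤ |d j - 1 - d'' j| + |(1:ℤ)| := abs_add_le _ _
          _ = |d j - 1 - d'' j| + 1 := by norm_num
      · rw [Function.update_of_ne h, if_neg h, add_zero]
    calc ∑ j, |d j - d'' j|
        ≤ ∑ j, (|Function.update d i (d i - 1) j - d'' j| + (if j = i then 1 else 0)) :=
          Finset.sum_le_sum fun j _ => hpt j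
      _ = (∑ j, |Function.update d i (d i - 1) j - d'' j|) + 1 := by
          rw [Finset.sum_add_distrib, Finset.sum_ite_eq' Finset.univ i (fun _ => (1:ℤ)),
            if_pos (Finset.mem_univ i)]
      _ ≤ (k:ℤ) + 1 := by linarith
      _ = ((k+1 : ℕ):ℤ) := by push_cast; ring

lemma distTo_eq (hn : 2 ≤ n) (d : Fin n → ℤ) : (distTo (NKn n) d : ℤ) = Mt n d := by
  have hnpos : 0 < n := by omega
  obtain ⟨d'', hd''N, hle⟩ := upper hn (Mt n d).toNat d (Int.toNat_of_nonneg (Mt_nonneg d)).symm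
  have hcast : ∀ (e : Fin n → ℤ), ((∑ i, (d i - e i).natAbs : ℕ) : ℤ) = ∑ i, |d i - e i| := by
    intro e
    push_cast [Int.natCast_natAbs]
    rfl
  have helem : (∑ i, (d i - d'' i).natAbs)
      ∈ {k : ℕ | ∃ d' ∈ NKn n, ∑ i, (d i - d' i).natAbs = k} := ⟨d'', hd''N, rfl⟩
  have h1 : distTo (NKn n) d ≤ ∑ i, (d i - d'' i).natAbs := Nat.sInf_le helem
  have h2 : ((∑ i, (d i - d'' i).natAbs : ℕ) : ℤ) ≤ Mt n d := by
    rw [hcast]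
    calc ∑ i, |d i - d'' i| ≤ (((Mt n d).toNat : ℕ) : ℤ) := hle
      _ = Mt n d := Int.toNat_of_nonneg (Mt_nonneg d)
  have hne2 : {k : ℕ | ∃ d' ∈ NKn n, ∑ i, (d i - d' i).natAbs = k}.Nonempty := ⟨_, helem⟩
  obtain ⟨d0, hd0N, hd0⟩ := Nat.sInf_mem hne2
  have h3 : Mt n d ≤ ∑ i, |d i - d0 i| := lower hnpos d d0 hd0N
  rw [← hcast d0] at h3
  have h4 : (distTo (NKn n) d : ℤ) ≤ Mt n d := by
    calc (distTo (NKn n) d : ℤ) ≤ ((∑ i, (d i - d'' i).natAbs : ℕ) : ℤ) := by exact_mod_cast h1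
      _ ≤ Mt n d := h2
  have h5 : Mt n d ≤ (distTo (NKn n) d : ℤ) := by
    have h6 : distTo (NKn n) d = ∑ i, (d i - d0 i).natAbs := by
      rw [distTo]; exact hd0.symm
    rw [h6]; exact h3
  linarith

lemma main_aux (hn : 2 ≤ n) (a : Fin n → ℤ) (ha : ∀ i, 0 ≤ a i) (v : Fin n)
    (hav : a v = 0) : rBN n a = rBN n (a - stdB v) + 1 := by
  have hnpos : 0 < n := by omega
  have hn0 : (0:ℤ) < n := by exact_mod_cast hnpos
  have hupd : a - stdB v = Function.update a v (a v - 1) := by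
    funext j
    by_cases h : j = v
    · subst h
      simp [stdB, Function.update_self]
    · simp [stdB, Function.update_of_ne h, h]
  have hslk0 : slk n a ((0:ℕ):ℤ) ≤ 0 := by
    unfold slk Sf deg
    have hterm : ∀ i : Fin n, (a i - ((0:ℕ):ℤ)) % n ≤ a i := by
      intro i
      rw [Nat.cast_zero, sub_zero]
      exact emod_le_self hn0 (ha i)
    have := Finset.sum_le_sum fun i (_ : i ∈ Finset.univ) => hterm i
    linarith
  have h0 : (a v - ((0:ℕ):ℤ)) % n = 0 := by
    rw [hav, Nat.cast_zero, sub_zero, Int.zero_emod]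
  have hMt : Mt n (a - stdB v) = Mt n a - 1 := by
    rw [hupd]
    exact Mt_update hn a v 0 (by omega) h0 hslk0
  have hge1 : 1 ≤ Mt n a := by
    have hmem : (0:ℕ) ∈ Finset.range n := Finset.mem_range.mpr (by omega)
    have h1 : (1:ℤ) ≤ mC n a ((0:ℕ):ℤ) := by
      unfold mC
      have h2 : (1:ℤ) ≤ ((n:ℤ) - slk n a ((0:ℕ):ℤ))/n :=
        (Int.le_ediv_iff_mul_le hn0).mpr (by linarith)
      omega
    calc (1:ℤ) ≤ mC n a ((0:ℕ):ℤ) := h1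
      _ ≤ Mt n a := Finset.single_le_sum (f := fun c : ℕ => mC n a (c:ℤ))
          (fun c _ => le_max_left _ _) hmem
  rw [rBN, rBN, distTo_eq hn, distTo_eq hn, hMt]
  ring

end S16

theorem stmt16 {n : ℕ} (hn : 2 ≤ n) (a : Fin n → ℤ) (ha : ∀ i, 0 ≤ a i)
    (ha2 : a ⟨n - 2, by omega⟩ = 0) :
    rBN n a = rBN n (a - stdB ⟨n - 2, by omega⟩) + 1 :=
  S16.main_aux hn a ha _ ha2
end
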